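/- arXiv:1811.07843 — 6 statements merged into one kernel-verified Lean document; each statement's English description precedes it below -/
import Mathlib

section
/- Weighted two-variable Lipschitz estimate: Let n ≥ 1, let ρ: ℝ → (0,∞) be monotonically decreasing (antitone), let K ≥ 0, and let a: ℝ × ℝⁿ → ℝ be differentiable with ‖Da(t,x)‖ ≤ K·ρ(t) for all (t,x), where ‖Da(t,x)‖ is the operator norm of the total (Fréchet) derivative. Then for all (t,x) and (t',x') one has |a(t,x) − a(t',x')| ≤ K·( max(ρ(t),ρ(t'))·|t−t'| + min(ρ(t),ρ(t'))·‖x−x'‖ ). -/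
/-!
Move from `(t, x)` to `(t', x')` in two axis-parallel steps, first in time and then in space,
with `t ≤ t'` after swapping the two points. By the mean value inequality, the time step costs at
most `K ρ(t) |t - t'|`, since `ρ` is largest at the left end of `[t, t']`, and the space step, taken
at the later time `t'`, costs at most `K ρ(t') ‖x - x'‖`.
-/

variable {E F : Type*} [NormedAddCommGroup E] [NormedSpace ℝ E]
  [NormedAddCommGroup F] [NormedSpace ℝ F]

theorem norm_sub_le_of_norm_fderiv_le_segment {f : E → F} (hf : Differentiable ℝ f) {C : ℝ}
    {x y : E} (hC : ∀ p ∈ segment ℝ x y, ‖fderiv ℝ f p‖ ≤ C) :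
    ‖f y - f x‖ ≤ C * ‖y - x‖ :=
  (convex_segment x y).norm_image_sub_le_of_norm_fderiv_le (fun _ _ => hf.differentiableAt) hC
    (left_mem_segment ℝ x y) (right_mem_segment ℝ x y)

theorem norm_sub_time_le_of_norm_fderiv_le_weight {ρ : ℝ → ℝ} (hρ : Antitone ρ) {K : ℝ}
    (hK : 0 ≤ K) {a : ℝ × E → F} (ha : Differentiable ℝ a)
    (hda : ∀ p : ℝ × E, ‖fderiv ℝ a p‖ ≤ K * ρ p.1) {t t' : ℝ} (htt' : t ≤ t') (x : E) :
    ‖a (t', x) - a (t, x)‖ ≤ K * ρ t * (t' - t) := by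
  have hbound : ∀ p ∈ segment ℝ (t, x) (t', x), ‖fderiv ℝ a p‖ ≤ K * ρ t := by
    rw [← Prod.image_mk_segment_left, segment_eq_Icc htt']
    rintro _ ⟨s, hs, rfl⟩
    exact (hda (s, x)).trans (mul_le_mul_of_nonneg_left (hρ hs.1) hK)
  have hdist : ‖((t', x) : ℝ × E) - (t, x)‖ = t' - t := by simp [htt']
  simpa only [hdist] using norm_sub_le_of_norm_fderiv_le_segment ha hbound

theorem norm_sub_space_le_of_norm_fderiv_le_weight {ρ : ℝ → ℝ} {K : ℝ} {a : ℝ × E → F}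
    (ha : Differentiable ℝ a) (hda : ∀ p : ℝ × E, ‖fderiv ℝ a p‖ ≤ K * ρ p.1) (t : ℝ)
    (x x' : E) :
    ‖a (t, x') - a (t, x)‖ ≤ K * ρ t * ‖x' - x‖ := by
  have hbound : ∀ p ∈ segment ℝ (t, x) (t, x'), ‖fderiv ℝ a p‖ ≤ K * ρ t := by
    rw [← Prod.image_mk_segment_right]
    rintro _ ⟨y, -, rfl⟩
    exact hda (t, y)
  simpa using norm_sub_le_of_norm_fderiv_le_segment ha hbound

theorem weighted_two_variable_lipschitz_general
    (n : ℕ)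
    (ρ : ℝ → ℝ) (hρanti : Antitone ρ)
    (K : ℝ) (hK : 0 ≤ K)
    (a : ℝ × EuclideanSpace ℝ (Fin n) → ℝ)
    (ha : Differentiable ℝ a)
    (hda : ∀ p : ℝ × EuclideanSpace ℝ (Fin n), ‖fderiv ℝ a p‖ ≤ K * ρ p.1) :
    ∀ (t t' : ℝ) (x x' : EuclideanSpace ℝ (Fin n)),
      |a (t, x) - a (t', x')| ≤
        K * (max (ρ t) (ρ t') * |t - t'| + min (ρ t) (ρ t') * ‖x - x'‖) := by
  intro t t' x x'
  wlog htt' : t ≤ t' generalizing t t' x x'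
  · simpa only [max_comm, min_comm, abs_sub_comm, norm_sub_rev] using
      this t' t x' x (le_of_not_ge htt')
  rw [max_eq_left (hρanti htt'), min_eq_right (hρanti htt'), abs_sub_comm t,
    abs_of_nonneg (sub_nonneg.mpr htt'), norm_sub_rev x]
  have htime := norm_sub_time_le_of_norm_fderiv_le_weight hρanti hK ha hda htt' x
  have hspace := norm_sub_space_le_of_norm_fderiv_le_weight ha hda t' x x'
  rw [Real.norm_eq_abs, abs_sub_comm] at htime hspace
  calc |a (t, x) - a (t', x')| ≤ |a (t, x) - a (t', x)| + |a (t', x) - a (t', x')| :=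
        abs_sub_le _ _ _
    _ ≤ K * (ρ t * (t' - t) + ρ t' * ‖x' - x‖) := by linarith

/-- Weighted two-variable Lipschitz estimate for functions whose total derivative
is bounded by `K * ρ t`. -/
theorem weighted_two_variable_lipschitz
    (n : ℕ) (hn : 1 ≤ n)
    (ρ : ℝ → ℝ) (hρpos : ∀ t, 0 < ρ t) (hρanti : Antitone ρ)
    (K : ℝ) (hK : 0 ≤ K)
    (a : ℝ × EuclideanSpace ℝ (Fin n) → ℝ)
    (ha : Differentiable ℝ a)
    (hda : ∀ p : ℝ × EuclideanSpace ℝ (Fin n), ‖fderiv ℝ a p‖ ≤ K * ρ p.1) :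
    ∀ (t t' : ℝ) (x x' : EuclideanSpace ℝ (Fin n)),
      |a (t, x) - a (t', x')| ≤
        K * (max (ρ t) (ρ t') * |t - t'| + min (ρ t) (ρ t') * ‖x - x'‖) :=
  weighted_two_variable_lipschitz_general n ρ hρanti K hK a ha hda
end

section
/- Weighted invariant section, C⁰ existence and uniqueness: Let X be a nonempty set, S a Banach space, t₀ ∈ ℝ, and ρ: (t₀,∞) → (0,∞) monotonically decreasing (antitone). Let ḡ: (t₀,∞) × X → X and L: (t₀,∞) × X × S → S be maps, let 0 ≤ K < 1 and C̃ ≥ 0, and let σ₀: X → S. Assume (a) ‖L(t,x,e) − L(t,x,e')‖ ≤ K‖e − e'‖ for all t ∈ (t₀,∞), x ∈ X, e, e' ∈ S, and (b) ‖L(t+1, ḡ(t,y), σ₀(ḡ(t,y))) − σ₀(y)‖ ≤ C̃·ρ(t) for all t ∈ (t₀,∞), y ∈ X. Then there is exactly one map σ: (t₀,∞) × X → S with sup over (t,y) of ‖σ(t,y) − σ₀(y)‖/ρ(t) finite which satisfies the invariance equation σ(t,y) = L(t+1, ḡ(t,y), σ(t+1, ḡ(t,y))) for all t ∈ (t₀,∞)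 and y ∈ X; moreover this σ satisfies ‖σ(t,y) − σ₀(y)‖ ≤ (C̃/(1−K))·ρ(t) for all (t,y). -/
/-- Weighted invariant section theorem, C⁰ existence and uniqueness: a fiber
contraction `L` covering the base map of a perturbed time-(−1) map has a unique
invariant section within distance `O(ρ)` of the reference section `σ₀`. -/
theorem weighted_invariant_section_C0
    {X : Type*} [Nonempty X]
    {S : Type*} [NormedAddCommGroup S] [NormedSpace ℝ S] [CompleteSpace S]
    (t₀ : ℝ) (ρ : ℝ → ℝ)
    (hρpos : ∀ t, t₀ < t → 0 < ρ t)
    (hρanti : ∀ s t, t₀ < s → s ≤ t → ρ t ≤ ρ s)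
    (g : ℝ → X → X) (L : ℝ → X → S → S)
    (K : ℝ) (hK0 : 0 ≤ K) (hK1 : K < 1)
    (C : ℝ) (hC : 0 ≤ C)
    (σ₀ : X → S)
    (hLip : ∀ t, t₀ < t → ∀ (x : X) (e e' : S), ‖L t x e - L t x e'‖ ≤ K * ‖e - e'‖)
    (hclose : ∀ t, t₀ < t → ∀ y : X,
      ‖L (t + 1) (g t y) (σ₀ (g t y)) - σ₀ y‖ ≤ C * ρ t) :
    ∃ σ : ℝ → X → S,
      ((∃ M : ℝ, ∀ t, t₀ < t → ∀ y : X, ‖σ t y - σ₀ y‖ ≤ M * ρ t) ∧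
        (∀ t, t₀ < t → ∀ y : X, σ t y = L (t + 1) (g t y) (σ (t + 1) (g t y))) ∧
        (∀ t, t₀ < t → ∀ y : X, ‖σ t y - σ₀ y‖ ≤ (C / (1 - K)) * ρ t)) ∧
      ∀ σ' : ℝ → X → S,
        (∃ M : ℝ, ∀ t, t₀ < t → ∀ y : X, ‖σ' t y - σ₀ y‖ ≤ M * ρ t) →
        (∀ t, t₀ < t → ∀ y : X, σ' t y = L (t + 1) (g t y) (σ' (t + 1) (g t y))) →
        ∀ t, t₀ < t → ∀ y : X, σ' t y = σ t y := by
  have hK1' : 0 < 1 - K := by linarith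
  -- iterates of the graph transform starting from σ₀
  set seq : ℕ → ℝ → X → S := fun n =>
    Nat.rec (fun _ y => σ₀ y) (fun _ s t y => L (t + 1) (g t y) (s (t + 1) (g t y))) n with hseq
  have seq_succ : ∀ n t y, seq (n + 1) t y = L (t + 1) (g t y) (seq n (t + 1) (g t y)) :=
    fun n t y => rfl
  have seq_zero : ∀ t y, seq 0 t y = σ₀ y := fun t y => rfl
  -- key geometric estimate
  have key : ∀ n, ∀ t, t₀ < t → ∀ y,
      ‖seq (n + 1) t y - seq n t y‖ ≤ (C * ρ t) * K ^ n := by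
    intro n
    induction n with
    | zero => intro t ht y; simpa [seq_succ, seq_zero] using hclose t ht y
    | succ n ih =>
      intro t ht y
      have ht1 : t₀ < t + 1 := by linarith
      have h1 : ‖seq (n + 2) t y - seq (n + 1) t y‖
          ≤ K * ‖seq (n + 1) (t + 1) (g t y) - seq n (t + 1) (g t y)‖ := by
        rw [seq_succ, seq_succ]
        exact hLip (t + 1) ht1 (g t y) _ _
      have h2 := ih (t + 1) ht1 (g t y)
      have hρ : ρ (t + 1) ≤ ρ t := hρanti t (t + 1) ht (by linarith)
      calc ‖seq (n + 2) t y - seq (n + 1) t y‖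
          ≤ K * ((C * ρ (t + 1)) * K ^ n) := h1.trans (by
            exact mul_le_mul_of_nonneg_left h2 hK0)
        _ ≤ K * ((C * ρ t) * K ^ n) := by
            apply mul_le_mul_of_nonneg_left _ hK0
            apply mul_le_mul_of_nonneg_right _ (pow_nonneg hK0 n)
            exact mul_le_mul_of_nonneg_left hρ hC
        _ = (C * ρ t) * K ^ (n + 1) := by ring
  have hdist : ∀ t, t₀ < t → ∀ y, ∀ n,
      dist (seq n t y) (seq (n + 1) t y) ≤ (C * ρ t) * K ^ n := by
    intro t ht y n
    rw [dist_eq_norm, norm_sub_rev]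
    exact key n t ht y
  have hcauchy : ∀ t, t₀ < t → ∀ y, CauchySeq (fun n => seq n t y) := fun t ht y =>
    cauchySeq_of_le_geometric K (C * ρ t) hK1 (hdist t ht y)
  set σ : ℝ → X → S := fun t y => Filter.limUnder Filter.atTop (fun n => seq n t y) with hσ
  have htend : ∀ t, t₀ < t → ∀ y,
      Filter.Tendsto (fun n => seq n t y) Filter.atTop (nhds (σ t y)) := fun t ht y =>
    (hcauchy t ht y).tendsto_limUnder
  -- the C/(1-K) bound
  have hbound : ∀ t, t₀ < t → ∀ y, ‖σ t y - σ₀ y‖ ≤ (C / (1 - K)) * ρ t := by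
    intro t ht y
    have := dist_le_of_le_geometric_of_tendsto₀ K (C * ρ t) hK1 (hdist t ht y) (htend t ht y)
    rw [seq_zero, dist_comm, dist_eq_norm] at this
    calc ‖σ t y - σ₀ y‖ ≤ C * ρ t / (1 - K) := this
      _ = (C / (1 - K)) * ρ t := by ring
  -- invariance
  have hinv : ∀ t, t₀ < t → ∀ y, σ t y = L (t + 1) (g t y) (σ (t + 1) (g t y)) := by
    intro t ht y
    have ht1 : t₀ < t + 1 := by linarith
    have hl : LipschitzWith ⟨K, hK0⟩ (L (t + 1) (g t y)) := by
      apply LipschitzWith.of_dist_le_mul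
      intro e e'
      rw [dist_eq_norm, dist_eq_norm]
      exact hLip (t + 1) ht1 (g t y) e e'
    have h1 : Filter.Tendsto (fun n => seq (n + 1) t y) Filter.atTop (nhds (σ t y)) :=
      (htend t ht y).comp (Filter.tendsto_add_atTop_nat 1)
    have h2 : Filter.Tendsto (fun n => L (t + 1) (g t y) (seq n (t + 1) (g t y)))
        Filter.atTop (nhds (L (t + 1) (g t y) (σ (t + 1) (g t y)))) :=
      (hl.continuous.tendsto _).comp (htend (t + 1) ht1 (g t y))
    exact tendsto_nhds_unique h1 h2
  refine ⟨σ, ⟨⟨C / (1 - K), hbound⟩, hinv, hbound⟩, ?_⟩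
  -- uniqueness
  intro σ' ⟨M, hM⟩ hinv' t ht y
  have hM0 : 0 ≤ M := by
    obtain y0 := Classical.arbitrary X
    have := (norm_nonneg _).trans (hM t ht y0)
    nlinarith [hρpos t ht]
  set M' := M + C / (1 - K) with hM'
  have hM'0 : 0 ≤ M' := by positivity
  have hdiff : ∀ n, ∀ t, t₀ < t → ∀ y, ‖σ' t y - σ t y‖ ≤ K ^ n * (M' * ρ t) := by
    intro n
    induction n with
    | zero =>
      intro t ht y
      calc ‖σ' t y - σ t y‖ ≤ ‖σ' t y - σ₀ y‖ + ‖σ t y - σ₀ y‖ := by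
            have := norm_sub_le (σ' t y - σ₀ y) (σ t y - σ₀ y)
            simpa using this
        _ ≤ M * ρ t + (C / (1 - K)) * ρ t := add_le_add (hM t ht y) (hbound t ht y)
        _ = K ^ 0 * (M' * ρ t) := by rw [hM']; ring
    | succ n ih =>
      intro t ht y
      have ht1 : t₀ < t + 1 := by linarith
      have hρ : ρ (t + 1) ≤ ρ t := hρanti t (t + 1) ht (by linarith)
      calc ‖σ' t y - σ t y‖
          = ‖L (t + 1) (g t y) (σ' (t + 1) (g t y)) - L (t + 1) (g t y) (σ (t + 1) (g t y))‖ := by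
            rw [hinv' t ht y, hinv t ht y]
        _ ≤ K * ‖σ' (t + 1) (g t y) - σ (t + 1) (g t y)‖ := hLip (t + 1) ht1 (g t y) _ _
        _ ≤ K * (K ^ n * (M' * ρ (t + 1))) :=
            mul_le_mul_of_nonneg_left (ih (t + 1) ht1 (g t y)) hK0
        _ ≤ K * (K ^ n * (M' * ρ t)) := by
            apply mul_le_mul_of_nonneg_left _ hK0
            apply mul_le_mul_of_nonneg_left _ (pow_nonneg hK0 n)
            exact mul_le_mul_of_nonneg_left hρ hM'0
        _ = K ^ (n + 1) * (M' * ρ t) := by ring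
  have hT : Filter.Tendsto (fun n => K ^ n * (M' * ρ t)) Filter.atTop (nhds 0) := by
    have := tendsto_pow_atTop_nhds_zero_of_lt_one hK0 hK1
    simpa using this.mul_const (M' * ρ t)
  have h0 : ‖σ' t y - σ t y‖ ≤ 0 :=
    ge_of_tendsto' hT (fun n => hdiff n t ht y)
  have := le_antisymm h0 (norm_nonneg _)
  rwa [norm_eq_zero, sub_eq_zero] at this
end

section
/- Weighted Lipschitz regularity of the invariant section: Let X be a metric space, S a Banach space, t₀ ∈ ℝ, and ρ: (t₀,∞) → (0,∞) monotonically decreasing (antitone). Let ḡ: (t₀,∞) × X → X and L: (t₀,∞) × X × S → S, let 0 ≤ K < 1, C̃ ≥ 0, α ≥ 0 with K·α < 1. Assume (a) ‖L(t,x,e) − L(t,x,e')‖ ≤ K‖e − e'‖ for all t, x, e, e'; (b) ‖L(t+1, ḡ(t,y), 0)‖ ≤ C̃·ρ(t) for all t ∈ (t₀,∞), y ∈ X; (c) d(ḡ(t,y), ḡ(t,y')) ≤ α·d(y,y') for all t, y, y'; (d) ‖L(t+1, x, e) − L(t+1, x', e)‖ ≤ C̃·ρ(t)·d(x,x') for all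 t ∈ (t₀,∞), x, x' ∈ X, e ∈ S. Then the unique map σ: (t₀,∞) × X → S with sup ‖σ(t,y)‖/ρ(t) < ∞ satisfying σ(t,y) = L(t+1, ḡ(t,y), σ(t+1, ḡ(t,y))) additionally satisfies the weighted Lipschitz estimate ‖σ(t,y) − σ(t,y')‖ ≤ (C̃·α/(1−K·α))·ρ(t)·d(y,y') for all t ∈ (t₀,∞) and y, y' ∈ X. -/
/-!
Iterating the invariance equation `n` times along the base inverse contracts the a priori
bound `2 M ρ(t)` on `‖σ t y - σ t y'‖` by `Kⁿ`, while each step adds at most `C α ρ(t) d(y, y')`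
and multiplies the accumulated weighted Lipschitz part by `K α` (using that `ρ` decreases).
The constant `c = C α / (1 - K α)` is the fixed point `c = K α c + C α` of this recursion,
so `‖σ t y - σ t y'‖ ≤ c ρ(t) d(y, y') + Kⁿ 2 M ρ(t)` for every `n`; let `n → ∞`.
-/

open Filter Topology

theorem le_of_forall_le_add_pow_mul {a b K D : ℝ} (hK0 : 0 ≤ K) (hK1 : K < 1)
    (h : ∀ n : ℕ, a ≤ b + K ^ n * D) : a ≤ b := by
  have hlim : Tendsto (fun n : ℕ => b + K ^ n * D) atTop (𝓝 (b + 0 * D)) :=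
    tendsto_const_nhds.add ((tendsto_pow_atTop_nhds_zero_of_lt_one hK0 hK1).mul_const D)
  simpa using ge_of_tendsto' hlim h

theorem norm_sub_le_of_lipschitz_fiber_of_lipschitz_base {X E F : Type*} [PseudoMetricSpace X]
    [SeminormedAddCommGroup E] [SeminormedAddCommGroup F] (Φ : X → E → F) {K B : ℝ}
    (hfiber : ∀ x e e', ‖Φ x e - Φ x e'‖ ≤ K * ‖e - e'‖)
    (hbase : ∀ x x' e, ‖Φ x e - Φ x' e‖ ≤ B * dist x x') (x x' : X) (e e' : E) :
    ‖Φ x e - Φ x' e'‖ ≤ K * ‖e - e'‖ + B * dist x x' :=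
  calc ‖Φ x e - Φ x' e'‖ ≤ ‖Φ x e - Φ x e'‖ + ‖Φ x e' - Φ x' e'‖ :=
        norm_sub_le_norm_sub_add_norm_sub _ _ _
    _ ≤ K * ‖e - e'‖ + B * dist x x' := add_le_add (hfiber x e e') (hbase x x' e')

section InvariantSection

variable {X : Type*} [PseudoMetricSpace X] {S : Type*} [SeminormedAddCommGroup S]
  {t₀ : ℝ} {ρ : ℝ → ℝ} {g : ℝ → X → X} {L : ℝ → X → S → S} {σ : ℝ → X → S} {K C α : ℝ}

theorem norm_sub_invariant_section_le_step (hC : 0 ≤ C) (hρ0 : ∀ t, t₀ < t → 0 ≤ ρ t)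
    (hLipFiber : ∀ t, t₀ < t → ∀ (x : X) (e e' : S), ‖L t x e - L t x e'‖ ≤ K * ‖e - e'‖)
    (hgLip : ∀ t, t₀ < t → ∀ y y' : X, dist (g t y) (g t y') ≤ α * dist y y')
    (hLipBase : ∀ t, t₀ < t → ∀ (x x' : X) (e : S),
      ‖L (t + 1) x e - L (t + 1) x' e‖ ≤ C * ρ t * dist x x')
    (hσinv : ∀ t, t₀ < t → ∀ y : X, σ t y = L (t + 1) (g t y) (σ (t + 1) (g t y)))
    {t : ℝ} (ht : t₀ < t) (y y' : X) :
    ‖σ t y - σ t y'‖ ≤ K * ‖σ (t + 1) (g t y) - σ (t + 1) (g t y')‖ + C * α * ρ t * dist y y' := by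
  rw [hσinv t ht y, hσinv t ht y']
  refine (norm_sub_le_of_lipschitz_fiber_of_lipschitz_base (L (t + 1))
    (hLipFiber (t + 1) (by linarith)) (hLipBase t ht) _ _ _ _).trans ?_
  have hCρ : 0 ≤ C * ρ t := mul_nonneg hC (hρ0 t ht)
  calc K * _ + C * ρ t * dist (g t y) (g t y')
      ≤ K * _ + C * ρ t * (α * dist y y') := by gcongr; exact hgLip t ht y y'
    _ = _ := by ring

theorem norm_sub_invariant_section_le_add_pow {M c : ℝ} (hK0 : 0 ≤ K) (hM0 : 0 ≤ M)
    (hc0 : 0 ≤ c) (hc : K * α * c + C * α ≤ c)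
    (hρ0 : ∀ t, t₀ < t → 0 ≤ ρ t) (hρanti : ∀ t, t₀ < t → ρ (t + 1) ≤ ρ t)
    (hgLip : ∀ t, t₀ < t → ∀ y y' : X, dist (g t y) (g t y') ≤ α * dist y y')
    (hM : ∀ t, t₀ < t → ∀ y : X, ‖σ t y‖ ≤ M * ρ t)
    (hstep : ∀ t, t₀ < t → ∀ y y' : X,
      ‖σ t y - σ t y'‖ ≤ K * ‖σ (t + 1) (g t y) - σ (t + 1) (g t y')‖ + C * α * ρ t * dist y y')
    (n : ℕ) : ∀ t, t₀ < t → ∀ y y' : X,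
      ‖σ t y - σ t y'‖ ≤ c * ρ t * dist y y' + K ^ n * (2 * M * ρ t) := by
  induction n with
  | zero =>
    intro t ht y y'
    have hcρd : 0 ≤ c * ρ t * dist y y' := by have := hρ0 t ht; positivity
    calc ‖σ t y - σ t y'‖ ≤ ‖σ t y‖ + ‖σ t y'‖ := norm_sub_le _ _
      _ ≤ M * ρ t + M * ρ t := add_le_add (hM t ht y) (hM t ht y')
      _ ≤ _ := by linarith
  | succ n ih =>
    intro t ht y y'
    have ht1 : t₀ < t + 1 := by linarith
    have hρt := hρ0 t ht
    have hρ1 := hρanti t ht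
    have hnext := ih (t + 1) ht1 (g t y) (g t y')
    have hshift : c * ρ (t + 1) * dist (g t y) (g t y') + K ^ n * (2 * M * ρ (t + 1))
        ≤ c * ρ t * (α * dist y y') + K ^ n * (2 * M * ρ t) := by
      gcongr
      exact hgLip t ht y y'
    have hρd : 0 ≤ ρ t * dist y y' := by positivity
    calc ‖σ t y - σ t y'‖
        ≤ K * (c * ρ t * (α * dist y y') + K ^ n * (2 * M * ρ t)) + C * α * ρ t * dist y y' := by
          have := hstep t ht y y'
          have := mul_le_mul_of_nonneg_left (hnext.trans hshift) hK0
          linarith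
      _ = (K * α * c + C * α) * (ρ t * dist y y') + K ^ (n + 1) * (2 * M * ρ t) := by ring
      _ ≤ c * (ρ t * dist y y') + K ^ (n + 1) * (2 * M * ρ t) := by gcongr
      _ = _ := by ring

end InvariantSection

theorem weighted_lipschitz_invariant_section_general
    {X : Type*} [MetricSpace X]
    {S : Type*} [NormedAddCommGroup S]
    (t₀ : ℝ) (ρ : ℝ → ℝ)
    (hρpos : ∀ t, t₀ < t → 0 < ρ t)
    (hρanti : ∀ s t, t₀ < s → s ≤ t → ρ t ≤ ρ s)
    (g : ℝ → X → X) (L : ℝ → X → S → S)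
    (K C α : ℝ) (hK0 : 0 ≤ K) (hK1 : K < 1) (hC : 0 ≤ C) (hα : 0 ≤ α)
    (hKα : K * α < 1)
    (hLipFiber : ∀ t, t₀ < t → ∀ (x : X) (e e' : S),
      ‖L t x e - L t x e'‖ ≤ K * ‖e - e'‖)
    (hgLip : ∀ t, t₀ < t → ∀ y y' : X, dist (g t y) (g t y') ≤ α * dist y y')
    (hLipBase : ∀ t, t₀ < t → ∀ (x x' : X) (e : S),
      ‖L (t + 1) x e - L (t + 1) x' e‖ ≤ C * ρ t * dist x x')
    (σ : ℝ → X → S)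
    (hσbdd : ∃ M : ℝ, ∀ t, t₀ < t → ∀ y : X, ‖σ t y‖ ≤ M * ρ t)
    (hσinv : ∀ t, t₀ < t → ∀ y : X, σ t y = L (t + 1) (g t y) (σ (t + 1) (g t y))) :
    ∀ t, t₀ < t → ∀ y y' : X,
      ‖σ t y - σ t y'‖ ≤ (C * α / (1 - K * α)) * ρ t * dist y y' := by
  intro t ht y y'
  obtain ⟨M, hM⟩ := hσbdd
  have hM0 : 0 ≤ M := nonneg_of_mul_nonneg_left ((norm_nonneg _).trans (hM t ht y)) (hρpos t ht)
  have hρ0 : ∀ t, t₀ < t → 0 ≤ ρ t := fun t ht => (hρpos t ht).le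
  have hgap : 0 < 1 - K * α := by linarith
  have hfixed : K * α * (C * α / (1 - K * α)) + C * α = C * α / (1 - K * α) := by
    field_simp; ring
  have hstep := fun t ht y y' =>
    norm_sub_invariant_section_le_step hC hρ0 hLipFiber hgLip hLipBase hσinv (t := t) ht y y'
  refine le_of_forall_le_add_pow_mul (D := 2 * M * ρ t) hK0 hK1 fun n => ?_
  exact norm_sub_invariant_section_le_add_pow hK0 hM0 (by positivity) hfixed.le hρ0
    (fun t ht => hρanti t (t + 1) ht (by linarith)) hgLip hM hstep n t ht y y'

/-- Weighted Lipschitz regularity of the invariant section: under the normal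
hyperbolicity condition `K * α < 1`, the unique `O(ρ)`-bounded invariant section
satisfies a weighted Lipschitz estimate. -/
theorem weighted_lipschitz_invariant_section
    {X : Type*} [MetricSpace X]
    {S : Type*} [NormedAddCommGroup S] [NormedSpace ℝ S]
    (t₀ : ℝ) (ρ : ℝ → ℝ)
    (hρpos : ∀ t, t₀ < t → 0 < ρ t)
    (hρanti : ∀ s t, t₀ < s → s ≤ t → ρ t ≤ ρ s)
    (g : ℝ → X → X) (L : ℝ → X → S → S)
    (K C α : ℝ) (hK0 : 0 ≤ K) (hK1 : K < 1) (hC : 0 ≤ C) (hα : 0 ≤ α)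
    (hKα : K * α < 1)
    (hLipFiber : ∀ t, t₀ < t → ∀ (x : X) (e e' : S),
      ‖L t x e - L t x e'‖ ≤ K * ‖e - e'‖)
    (hSmall : ∀ t, t₀ < t → ∀ y : X, ‖L (t + 1) (g t y) 0‖ ≤ C * ρ t)
    (hgLip : ∀ t, t₀ < t → ∀ y y' : X, dist (g t y) (g t y') ≤ α * dist y y')
    (hLipBase : ∀ t, t₀ < t → ∀ (x x' : X) (e : S),
      ‖L (t + 1) x e - L (t + 1) x' e‖ ≤ C * ρ t * dist x x')
    (σ : ℝ → X → S)
    (hσbdd : ∃ M : ℝ, ∀ t, t₀ < t → ∀ y : X, ‖σ t y‖ ≤ M * ρ t)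
    (hσinv : ∀ t, t₀ < t → ∀ y : X, σ t y = L (t + 1) (g t y) (σ (t + 1) (g t y))) :
    ∀ t, t₀ < t → ∀ y y' : X,
      ‖σ t y - σ t y'‖ ≤ (C * α / (1 - K * α)) * ρ t * dist y y' :=
  weighted_lipschitz_invariant_section_general t₀ ρ hρpos hρanti g L K C α hK0 hK1 hC hα hKα
    hLipFiber hgLip hLipBase σ hσbdd hσinv
end

section
/- Fiber contraction principle with continuity: Let B be a topological space, S a Banach space, h: B → B a map, and F: B × S → S a map such that for some 0 ≤ K < 1 one has ‖F(b,e) − F(b,e')‖ ≤ K‖e − e'‖ for all b ∈ B and e, e' ∈ S, and such that sup over b ∈ B of ‖F(b,0)‖ is finite. Then there is exactly one bounded map s: B → S satisfying s(b) = F(b, s(h(b))) for all b ∈ B. If moreover h and F are continuous, then s is continuous. -/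
/-!
The map `f ↦ (b ↦ F b (f (h b)))` is a `K`-contraction for the sup distance, so on a complete space
of bounded maps it has exactly one fixed point. Uniqueness holds among all bounded maps, since the
distance between two bounded invariant sections is multiplied by `K` at each step. For existence,
apply the contraction principle to bounded maps, viewed as bounded continuous maps for the discrete
topology on `B`. When `h` and `F` are continuous, the map also preserves the complete space of
bounded continuous maps for the given topology, so its fixed point there is continuous, and by
uniqueness it is the bounded invariant section.
-/

open BoundedContinuousFunction Filter

section

variable {B S : Type*} [NormedAddCommGroup S]

theorem norm_le_add_mul_norm_of_norm_sub_le {F : S → S} {K M : ℝ}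
    (hLip : ∀ e e' : S, ‖F e - F e'‖ ≤ K * ‖e - e'‖) (hM : ‖F 0‖ ≤ M) (e : S) :
    ‖F e‖ ≤ M + K * ‖e‖ :=
  calc ‖F e‖ ≤ ‖F e - F 0‖ + ‖F 0‖ := norm_le_norm_sub_add _ _
    _ ≤ K * ‖e‖ + M := by simpa using add_le_add (hLip e 0) hM
    _ = M + K * ‖e‖ := add_comm _ _

theorem exists_boundedContinuous_invariant_section [TopologicalSpace B] [CompleteSpace S]
    {h : B → B} {F : B → S → S} {K : ℝ} (hK0 : 0 ≤ K) (hK1 : K < 1)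
    (hLip : ∀ (b : B) (e e' : S), ‖F b e - F b e'‖ ≤ K * ‖e - e'‖)
    (hbdd : ∃ M : ℝ, ∀ b : B, ‖F b 0‖ ≤ M)
    (hcont : ∀ f : B →ᵇ S, Continuous fun b => F b (f (h b))) :
    ∃ s : B →ᵇ S, ∀ b, s b = F b (s (h b)) := by
  obtain ⟨M, hM⟩ := hbdd
  let T : (B →ᵇ S) → (B →ᵇ S) := fun f =>
    ofNormedAddCommGroup (fun b => F b (f (h b))) (hcont f) (M + K * ‖f‖) fun b =>
      (norm_le_add_mul_norm_of_norm_sub_le (hLip b) (hM b) _).trans <| by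
        gcongr; exact f.norm_coe_le_norm _
  have hT : ContractingWith ⟨K, hK0⟩ T := by
    refine ⟨by exact_mod_cast hK1, LipschitzWith.of_dist_le_mul fun f g => ?_⟩
    refine (dist_le (by positivity)).2 fun b => ?_
    calc dist (T f b) (T g b) ≤ K * dist (f (h b)) (g (h b)) := by
          simp only [dist_eq_norm]; exact hLip b _ _
      _ ≤ K * dist f g := by gcongr; exact dist_coe_le_dist _
  obtain ⟨s, hs, -⟩ := hT.exists_fixedPoint 0 (edist_ne_top _ _)
  exact ⟨s, fun b => (congrArg (· b) hs).symm⟩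

theorem exists_bounded_invariant_section [CompleteSpace S] {h : B → B} {F : B → S → S} {K : ℝ}
    (hK0 : 0 ≤ K) (hK1 : K < 1) (hLip : ∀ (b : B) (e e' : S), ‖F b e - F b e'‖ ≤ K * ‖e - e'‖)
    (hbdd : ∃ M : ℝ, ∀ b : B, ‖F b 0‖ ≤ M) :
    ∃ s : B → S, (∃ M : ℝ, ∀ b : B, ‖s b‖ ≤ M) ∧ ∀ b, s b = F b (s (h b)) := by
  let : TopologicalSpace B := ⊥
  have : DiscreteTopology B := ⟨rfl⟩
  obtain ⟨s, hs⟩ := exists_boundedContinuous_invariant_section hK0 hK1 hLip hbdd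
    fun _ => continuous_of_discreteTopology
  exact ⟨s, ⟨‖s‖, s.norm_coe_le_norm⟩, hs⟩

theorem norm_sub_le_pow_mul_of_invariant {h : B → B} {F : B → S → S} {K C : ℝ} (hK0 : 0 ≤ K)
    (hLip : ∀ (b : B) (e e' : S), ‖F b e - F b e'‖ ≤ K * ‖e - e'‖) {s₁ s₂ : B → S}
    (hC : ∀ b, ‖s₁ b - s₂ b‖ ≤ C)
    (hs₁ : ∀ b, s₁ b = F b (s₁ (h b))) (hs₂ : ∀ b, s₂ b = F b (s₂ (h b))) :
    ∀ (n : ℕ) (b : B), ‖s₁ b - s₂ b‖ ≤ K ^ n * C := by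
  intro n
  induction n with
  | zero => simpa using hC
  | succ n ih =>
    intro b
    calc ‖s₁ b - s₂ b‖ = ‖F b (s₁ (h b)) - F b (s₂ (h b))‖ := by rw [← hs₁, ← hs₂]
      _ ≤ K * (K ^ n * C) := (hLip b _ _).trans (by gcongr; exact ih (h b))
      _ = K ^ (n + 1) * C := by ring

theorem eq_of_bounded_invariant {h : B → B} {F : B → S → S} {K : ℝ} (hK0 : 0 ≤ K) (hK1 : K < 1)
    (hLip : ∀ (b : B) (e e' : S), ‖F b e - F b e'‖ ≤ K * ‖e - e'‖) {s₁ s₂ : B → S}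
    (hb₁ : ∃ M : ℝ, ∀ b : B, ‖s₁ b‖ ≤ M) (hb₂ : ∃ M : ℝ, ∀ b : B, ‖s₂ b‖ ≤ M)
    (hs₁ : ∀ b, s₁ b = F b (s₁ (h b))) (hs₂ : ∀ b, s₂ b = F b (s₂ (h b))) : s₁ = s₂ := by
  obtain ⟨M₁, hM₁⟩ := hb₁
  obtain ⟨M₂, hM₂⟩ := hb₂
  have hC : ∀ b, ‖s₁ b - s₂ b‖ ≤ M₁ + M₂ := fun b =>
    (norm_sub_le _ _).trans (add_le_add (hM₁ b) (hM₂ b))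
  have hlim : Tendsto (fun n : ℕ => K ^ n * (M₁ + M₂)) atTop (nhds 0) := by
    simpa using (tendsto_pow_atTop_nhds_zero_of_lt_one hK0 hK1).mul_const (M₁ + M₂)
  funext b
  rw [← sub_eq_zero, ← norm_le_zero_iff]
  exact ge_of_tendsto' hlim fun n => norm_sub_le_pow_mul_of_invariant hK0 hLip hC hs₁ hs₂ n b

end

theorem fiber_contraction_principle_general
    {B : Type*} [TopologicalSpace B]
    {S : Type*} [NormedAddCommGroup S] [CompleteSpace S]
    (h : B → B) (F : B → S → S)
    (K : ℝ) (hK0 : 0 ≤ K) (hK1 : K < 1)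
    (hLip : ∀ (b : B) (e e' : S), ‖F b e - F b e'‖ ≤ K * ‖e - e'‖)
    (hbdd : ∃ M : ℝ, ∀ b : B, ‖F b 0‖ ≤ M) :
    (∃! s : B → S, (∃ M : ℝ, ∀ b : B, ‖s b‖ ≤ M) ∧ ∀ b : B, s b = F b (s (h b))) ∧
    (Continuous h → Continuous (fun z : B × S => F z.1 z.2) →
      ∀ s : B → S, (∃ M : ℝ, ∀ b : B, ‖s b‖ ≤ M) → (∀ b : B, s b = F b (s (h b))) →
        Continuous s) := by
  refine ⟨?_, fun hh hF s hs_bdd hs => ?_⟩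
  · obtain ⟨s, hs_bdd, hs⟩ := exists_bounded_invariant_section (h := h) hK0 hK1 hLip hbdd
    exact ⟨s, ⟨hs_bdd, hs⟩, fun s' ⟨hs'_bdd, hs'⟩ =>
      eq_of_bounded_invariant hK0 hK1 hLip hs'_bdd hs_bdd hs' hs⟩
  · obtain ⟨s₀, hs₀⟩ := exists_boundedContinuous_invariant_section hK0 hK1 hLip hbdd
      fun f => hF.comp (continuous_id.prodMk (f.continuous.comp hh))
    rw [eq_of_bounded_invariant hK0 hK1 hLip hs_bdd ⟨‖s₀‖, s₀.norm_coe_le_norm⟩ hs hs₀]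
    exact s₀.continuous

/-- Fiber contraction principle with continuity: a fiber contraction over an
arbitrary base has a unique bounded invariant section, which is continuous when
the data are continuous. -/
theorem fiber_contraction_principle
    {B : Type*} [TopologicalSpace B]
    {S : Type*} [NormedAddCommGroup S] [NormedSpace ℝ S] [CompleteSpace S]
    (h : B → B) (F : B → S → S)
    (K : ℝ) (hK0 : 0 ≤ K) (hK1 : K < 1)
    (hLip : ∀ (b : B) (e e' : S), ‖F b e - F b e'‖ ≤ K * ‖e - e'‖)
    (hbdd : ∃ M : ℝ, ∀ b : B, ‖F b 0‖ ≤ M) :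
    (∃! s : B → S, (∃ M : ℝ, ∀ b : B, ‖s b‖ ≤ M) ∧ ∀ b : B, s b = F b (s (h b))) ∧
    (Continuous h → Continuous (fun z : B × S => F z.1 z.2) →
      ∀ s : B → S, (∃ M : ℝ, ∀ b : B, ‖s b‖ ≤ M) → (∀ b : B, s b = F b (s (h b))) →
        Continuous s) :=
  fiber_contraction_principle_general h F K hK0 hK1 hLip hbdd
end

section
/- Euclidean-model unstable manifold for a decaying perturbation of a hyperbolic map: Let p, q ≥ 1, let λ > 1 and 0 ≤ κ < 1, let A: ℝᵖ → ℝᵖ be an invertible linear map with ‖A⁻¹‖ ≤ λ⁻¹, and let B: ℝ^q → ℝ^q be a linear map with ‖B‖ ≤ κ. Let ρ: ℝ → (0,∞) be monotonically decreasing with ρ(t) → 0 as t → ∞, let C̃ ≥ 0, and let g = (g₁,g₂): ℝ × ℝᵖ × ℝ^q → ℝᵖ × ℝ^q satisfy ‖g(t,v)‖ ≤ C̃·ρ(t) and ‖g(t,v) − g(t,v')‖ ≤ C̃·ρ(t)·‖v − v'‖ for all t ∈ ℝ and v, v' ∈ ℝᵖ × ℝ^q. Define f(t,u,s) = (t−1,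 A u + g₁(t,u,s), B s + g₂(t,u,s)). Then there exist t₁ ∈ ℝ, C ≥ 0, and a map σ: (t₁,∞) × ℝᵖ → ℝ^q such that: (i) ‖σ(t,u)‖ ≤ C·ρ(t) and ‖σ(t,u) − σ(t,u')‖ ≤ C·ρ(t)·‖u − u'‖ for all t > t₁ and u, u' ∈ ℝᵖ; (ii) the graph Γᵘ = {(t, u, σ(t,u)) : t > t₁, u ∈ ℝᵖ} satisfies f(Γᵘ ∩ {t > t₁ + 1}) = Γᵘ; (iii) if σ': (t₁,∞) × ℝᵖ → ℝ^q satisfies (i) with some constant C' ≥ 0 in place of C and its graph satisfies (ii), then σ' = σ. -/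
open Filter Topology

set_option linter.unusedSectionVars false
set_option maxHeartbeats 1000000

namespace EUMAux

variable {E F : Type*} [NormedAddCommGroup E] [NormedSpace ℝ E]
  [NormedAddCommGroup F] [NormedSpace ℝ F]

/-- Backward-orbit predicate: `v n` is the orbit point at time `t + n`. -/
def IsOrbit (A : E ≃L[ℝ] E) (B : F →L[ℝ] F) (g : ℝ → E × F → E × F)
    (t : ℝ) (u : E) (v : ℕ → E × F) : Prop :=
  (v 0).1 = u ∧ ∀ n : ℕ,
    (v n).1 = A ((v (n+1)).1) + (g (t + n + 1) (v (n+1))).1 ∧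
    (v n).2 = B ((v (n+1)).2) + (g (t + n + 1) (v (n+1))).2

/-- The Lyapunov–Perron operator whose fixed points are backward orbits. -/
noncomputable def phi (A : E ≃L[ℝ] E) (B : F →L[ℝ] F) (g : ℝ → E × F → E × F)
    (t : ℝ) (u : E) (v : ℕ → E × F) : ℕ → E × F := fun n =>
  (Nat.casesOn n u (fun m => A.symm ((v m).1 - (g (t + m + 1) (v (m+1))).1)),
   B ((v (n+1)).2) + (g (t + n + 1) (v (n+1))).2)

variable {A : E ≃L[ℝ] E} {B : F →L[ℝ] F} {g : ℝ → E × F → E × F} {t : ℝ} {u u' : E}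
variable {a b e : ℝ}

lemma isOrbit_iff_fixed (v : ℕ → E × F) :
    IsOrbit A B g t u v ↔ phi A B g t u v = v := by
  constructor
  · rintro ⟨h0, hrec⟩
    funext n
    refine Prod.ext ?_ ?_
    · cases n with
      | zero => exact h0.symm
      | succ m =>
        show A.symm ((v m).1 - (g (t + m + 1) (v (m+1))).1) = (v (m+1)).1
        rw [(hrec m).1]; simp
    · exact ((hrec n).2).symm
  · intro h
    constructor
    · rw [← h]; rfl
    · intro n
      have h1 : (v (n+1)).1 = A.symm ((v n).1 - (g (t + n + 1) (v (n+1))).1) := by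
        conv_lhs => rw [← h]
        rfl
      have h2 : (v n).2 = B ((v (n+1)).2) + (g (t + n + 1) (v (n+1))).2 := by
        conv_lhs => rw [← h]
        rfl
      exact ⟨by rw [h1]; simp, h2⟩

lemma fst_diff_le (x y : E × F) : ‖x.1 - y.1‖ ≤ ‖x - y‖ := by
  simpa using norm_fst_le (x - y)

lemma snd_diff_le (x y : E × F) : ‖x.2 - y.2‖ ≤ ‖x - y‖ := by
  simpa using norm_snd_le (x - y)

lemma phi_dist {a b e : ℝ} (ha : 0 ≤ a) (hb : 0 ≤ b) (he : 0 ≤ e)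
    (hA : ∀ y : E, ‖A.symm y‖ ≤ a * ‖y‖)
    (hB : ∀ y : F, ‖B y‖ ≤ b * ‖y‖)
    (hgL : ∀ (n : ℕ) (x y : E × F), ‖g (t + n + 1) x - g (t + n + 1) y‖ ≤ e * ‖x - y‖)
    (v w : ℕ → E × F) (d : ℝ) (hd : ∀ n, ‖v n - w n‖ ≤ d) (n : ℕ) :
    ‖phi A B g t u v n - phi A B g t u' w n‖
      ≤ max (a * (1 + e)) (b + e) * d + ‖u - u'‖ := by
  have hd0 : 0 ≤ d := le_trans (norm_nonneg _) (hd 0)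
  have hmax0 : 0 ≤ max (a * (1 + e)) (b + e) := le_max_of_le_right (by positivity)
  rw [Prod.norm_def]
  apply max_le
  · rw [Prod.fst_sub]
    cases n with
    | zero =>
      show ‖u - u'‖ ≤ _
      nlinarith
    | succ m =>
      show ‖A.symm ((v m).1 - (g (t + m + 1) (v (m+1))).1)
          - A.symm ((w m).1 - (g (t + m + 1) (w (m+1))).1)‖ ≤ _
      rw [← map_sub]
      refine le_trans (hA _) ?_
      have h1 : ‖(v m).1 - (g (t + m + 1) (v (m+1))).1
          - ((w m).1 - (g (t + m + 1) (w (m+1))).1)‖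
          ≤ ‖(v m).1 - (w m).1‖
            + ‖(g (t + m + 1) (v (m+1))).1 - (g (t + m + 1) (w (m+1))).1‖ := by
        rw [sub_sub_sub_comm]
        exact norm_sub_le _ _
      have h2 : ‖(v m).1 - (w m).1‖ ≤ d := le_trans (fst_diff_le _ _) (hd m)
      have h3 : ‖(g (t + m + 1) (v (m+1))).1 - (g (t + m + 1) (w (m+1))).1‖ ≤ e * d := by
        refine le_trans (fst_diff_le _ _) (le_trans (hgL m _ _) ?_)
        exact mul_le_mul_of_nonneg_left (hd (m+1)) he
      have h4 : a * (‖(v m).1 - (g (t + m + 1) (v (m+1))).1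
          - ((w m).1 - (g (t + m + 1) (w (m+1))).1)‖) ≤ a * (1 + e) * d := by
        nlinarith
      have h5 : a * (1 + e) * d ≤ max (a * (1 + e)) (b + e) * d :=
        mul_le_mul_of_nonneg_right (le_max_left _ _) hd0
      nlinarith [norm_nonneg (u - u')]
  · rw [Prod.snd_sub]
    show ‖B ((v (n+1)).2) + (g (t + n + 1) (v (n+1))).2
        - (B ((w (n+1)).2) + (g (t + n + 1) (w (n+1))).2)‖ ≤ _
    have key : B ((v (n+1)).2) + (g (t + n + 1) (v (n+1))).2
        - (B ((w (n+1)).2) + (g (t + n + 1) (w (n+1))).2)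
        = B ((v (n+1)).2 - (w (n+1)).2)
          + ((g (t + n + 1) (v (n+1))) - (g (t + n + 1) (w (n+1)))).2 := by
      rw [map_sub, Prod.snd_sub]; abel
    rw [key]
    refine le_trans (norm_add_le _ _) ?_
    have h2 : ‖B ((v (n+1)).2 - (w (n+1)).2)‖ ≤ b * d := by
      refine le_trans (hB _) ?_
      exact mul_le_mul_of_nonneg_left (le_trans (snd_diff_le _ _) (hd (n+1))) hb
    have h3 : ‖((g (t + n + 1) (v (n+1))) - (g (t + n + 1) (w (n+1)))).2‖ ≤ e * d := by
      refine le_trans (norm_snd_le _) (le_trans (hgL n _ _) ?_)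
      exact mul_le_mul_of_nonneg_left (hd (n+1)) he
    have h5 : (b + e) * d ≤ max (a * (1 + e)) (b + e) * d :=
      mul_le_mul_of_nonneg_right (le_max_right _ _) hd0
    nlinarith [norm_nonneg (u - u')]

lemma exists_orbit [CompleteSpace E] [CompleteSpace F]
    (ha : 0 ≤ a) (hb : 0 ≤ b) (he : 0 ≤ e)
    (hθ1 : max (a * (1 + e)) (b + e) < 1)
    (hA : ∀ y : E, ‖A.symm y‖ ≤ a * ‖y‖)
    (hB : ∀ y : F, ‖B y‖ ≤ b * ‖y‖)
    (hgL : ∀ (n : ℕ) (x y : E × F), ‖g (t + n + 1) x - g (t + n + 1) y‖ ≤ e * ‖x - y‖)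
    (eb : ℝ) (heb : 0 ≤ eb) (hgB : ∀ (n : ℕ) (x : E × F), ‖g (t + n + 1) x‖ ≤ eb) :
    ∃ v : ℕ → E × F, IsOrbit A B g t u v ∧ ∃ M : ℝ, ∀ n, ‖v n‖ ≤ M := by
  set θ : ℝ := max (a * (1 + e)) (b + e) with hθdef
  have hθ0 : 0 ≤ θ := le_max_of_le_right (by positivity)
  set d₀ : ℝ := a * (‖u‖ + eb) + ‖u‖ + eb with hd₀def
  have hd₀0 : 0 ≤ d₀ := by positivity
  set P : (ℕ → E × F) → (ℕ → E × F) := phi A B g t u with hPdef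
  set sq : ℕ → ℕ → E × F := fun k => P^[k] (fun _ => (u, 0)) with hsqdef
  have hsq_succ : ∀ k, sq (k+1) = P (sq k) := by
    intro k
    simp only [hsqdef, Function.iterate_succ_apply']
  -- first step bound
  have hstep0 : ∀ n, ‖sq 1 n - sq 0 n‖ ≤ d₀ := by
    intro n
    have hsq0 : sq 0 = fun _ => (u, 0) := rfl
    rw [hsq_succ 0, hsq0]
    rw [Prod.norm_def]
    apply max_le
    · rw [Prod.fst_sub]
      cases n with
      | zero =>
        show ‖u - u‖ ≤ d₀
        simp [hd₀def]; positivity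
      | succ m =>
        show ‖A.symm (((fun _ => ((u : E), (0 : F))) m).1
            - (g (t + m + 1) ((fun _ => (u, 0)) (m+1))).1) - u‖ ≤ d₀
        refine le_trans (norm_sub_le _ _) ?_
        have h1 : ‖A.symm ((u : E) - (g (t + m + 1) ((u, 0) : E × F)).1)‖
            ≤ a * (‖u‖ + eb) := by
          refine le_trans (hA _) ?_
          refine mul_le_mul_of_nonneg_left (le_trans (norm_sub_le _ _) ?_) ha
          have := le_trans (norm_fst_le _) (hgB m ((u, 0) : E × F))
          linarith
        simp only [hd₀def]
        linarith
    · rw [Prod.snd_sub]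
      show ‖B ((0 : F)) + (g (t + n + 1) ((u, 0) : E × F)).2 - 0‖ ≤ d₀
      rw [map_zero, zero_add, sub_zero]
      have := le_trans (norm_snd_le _) (hgB n ((u, 0) : E × F))
      simp only [hd₀def]
      nlinarith [norm_nonneg u, mul_nonneg ha (by positivity : (0:ℝ) ≤ ‖u‖ + eb)]
  have hstep : ∀ k n, ‖sq (k+1) n - sq k n‖ ≤ d₀ * θ ^ k := by
    intro k
    induction k with
    | zero => intro n; simpa using hstep0 n
    | succ k ih =>
      intro n
      have hpd := phi_dist (u := u) (u' := u) ha hb he hA hB hgL (sq (k+1)) (sq k)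
        (d₀ * θ ^ k) ih n
      rw [sub_self, norm_zero, add_zero] at hpd
      calc ‖sq (k+1+1) n - sq (k+1) n‖
          = ‖P (sq (k+1)) n - P (sq k) n‖ := by rw [hsq_succ (k+1), hsq_succ k]
        _ ≤ θ * (d₀ * θ ^ k) := hpd
        _ = d₀ * θ ^ (k+1) := by ring
  have hcauchy : ∀ n, ∃ x, Tendsto (fun k => sq k n) atTop (𝓝 x) := by
    intro n
    apply cauchySeq_tendsto_of_complete
    apply cauchySeq_of_le_geometric θ d₀ hθ1
    intro k
    rw [dist_eq_norm, norm_sub_rev]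
    exact hstep k n
  choose vl hvl using hcauchy
  have htail : ∀ k n, ‖sq k n - vl n‖ ≤ d₀ * θ ^ k / (1 - θ) := by
    intro k n
    have := dist_le_of_le_geometric_of_tendsto θ d₀ hθ1
      (fun j => by rw [dist_eq_norm, norm_sub_rev]; exact hstep j n) (hvl n) k
    rwa [dist_eq_norm] at this
  have hθpos : 0 < 1 - θ := by linarith
  have hfix : phi A B g t u vl = vl := by
    funext n
    have hk : ∀ k : ℕ, ‖phi A B g t u vl n - vl n‖
        ≤ (θ * (d₀ / (1 - θ)) + d₀ * θ / (1 - θ)) * θ ^ k := by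
      intro k
      have h1 : ∀ m, ‖vl m - sq k m‖ ≤ d₀ * θ ^ k / (1 - θ) := by
        intro m; rw [norm_sub_rev]; exact htail k m
      have h2 := phi_dist (u := u) (u' := u) ha hb he hA hB hgL vl (sq k)
        (d₀ * θ ^ k / (1 - θ)) h1 n
      rw [sub_self, norm_zero, add_zero] at h2
      have h3 : ‖phi A B g t u vl n - vl n‖
          ≤ ‖phi A B g t u vl n - sq (k+1) n‖ + ‖sq (k+1) n - vl n‖ :=
        norm_sub_le_norm_sub_add_norm_sub _ _ _
      have h4 : ‖phi A B g t u vl n - sq (k+1) n‖ ≤ θ * (d₀ * θ ^ k / (1 - θ)) := by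
        rw [hsq_succ k]; exact h2
      have h5 := htail (k+1) n
      calc ‖phi A B g t u vl n - vl n‖
          ≤ θ * (d₀ * θ ^ k / (1 - θ)) + d₀ * θ ^ (k+1) / (1 - θ) := by linarith
        _ = (θ * (d₀ / (1 - θ)) + d₀ * θ / (1 - θ)) * θ ^ k := by ring
    have hlim : Tendsto (fun k : ℕ => (θ * (d₀ / (1 - θ)) + d₀ * θ / (1 - θ)) * θ ^ k)
        atTop (𝓝 0) := by
      have := (tendsto_pow_atTop_nhds_zero_of_lt_one hθ0 hθ1).const_mul
        (θ * (d₀ / (1 - θ)) + d₀ * θ / (1 - θ))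
      simpa using this
    have : ‖phi A B g t u vl n - vl n‖ ≤ 0 := ge_of_tendsto' hlim (fun k => hk k)
    have := le_antisymm this (norm_nonneg _)
    rw [norm_eq_zero, sub_eq_zero] at this
    exact this
  refine ⟨vl, (isOrbit_iff_fixed vl).2 hfix, ‖u‖ + d₀ / (1 - θ), ?_⟩
  intro n
  have h0 : ‖sq 0 n‖ ≤ ‖u‖ := by
    show ‖((u, 0) : E × F)‖ ≤ ‖u‖
    rw [Prod.norm_def]
    simp
  have h1 := htail 0 n
  simp only [pow_zero, mul_one] at h1
  calc ‖vl n‖ ≤ ‖sq 0 n‖ + ‖sq 0 n - vl n‖ := by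
        have := norm_sub_le (sq 0 n) (sq 0 n - vl n)
        simpa using this
    _ ≤ ‖u‖ + d₀ / (1 - θ) := by linarith

/-- Two bounded backward orbits with base points `u`, `u'` stay within
`‖u - u'‖ / (1 - θ)` of each other. -/
lemma orbit_dist (ha : 0 ≤ a) (hb : 0 ≤ b) (he : 0 ≤ e)
    (hθ1 : max (a * (1 + e)) (b + e) < 1)
    (hA : ∀ y : E, ‖A.symm y‖ ≤ a * ‖y‖)
    (hB : ∀ y : F, ‖B y‖ ≤ b * ‖y‖)
    (hgL : ∀ (n : ℕ) (x y : E × F), ‖g (t + n + 1) x - g (t + n + 1) y‖ ≤ e * ‖x - y‖)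
    (v w : ℕ → E × F) (hv : IsOrbit A B g t u v) (hw : IsOrbit A B g t u' w)
    (Mv : ℝ) (hMv : ∀ n, ‖v n‖ ≤ Mv) (Mw : ℝ) (hMw : ∀ n, ‖w n‖ ≤ Mw) :
    ∀ n, ‖v n - w n‖ ≤ ‖u - u'‖ / (1 - max (a * (1 + e)) (b + e)) := by
  set θ : ℝ := max (a * (1 + e)) (b + e) with hθdef
  have hθ0 : 0 ≤ θ := le_max_of_le_right (by positivity)
  have hθpos : 0 < 1 - θ := by linarith
  have hfv := (isOrbit_iff_fixed v).1 hv
  have hfw := (isOrbit_iff_fixed w).1 hw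
  set δ : ℝ := ‖u - u'‖ with hδdef
  have hδ0 : 0 ≤ δ := norm_nonneg _
  have key : ∀ k n, ‖v n - w n‖ ≤ (Mv + Mw) * θ ^ k + δ / (1 - θ) := by
    intro k
    induction k with
    | zero =>
      intro n
      have h1 : ‖v n - w n‖ ≤ Mv + Mw :=
        le_trans (norm_sub_le _ _) (add_le_add (hMv n) (hMw n))
      have : 0 ≤ δ / (1 - θ) := by positivity
      simpa using le_trans h1 (by linarith)
    | succ k ih =>
      intro n
      have hpd := phi_dist (u := u) (u' := u') ha hb he hA hB hgL v w
        ((Mv + Mw) * θ ^ k + δ / (1 - θ)) ih n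
      rw [hfv, hfw] at hpd
      calc ‖v n - w n‖ ≤ θ * ((Mv + Mw) * θ ^ k + δ / (1 - θ)) + δ := hpd
        _ = (Mv + Mw) * θ ^ (k+1) + (θ * (δ / (1 - θ)) + δ) := by ring
        _ = (Mv + Mw) * θ ^ (k+1) + δ / (1 - θ) := by
            congr 1
            field_simp
            ring
  intro n
  have hlim : Tendsto (fun k : ℕ => (Mv + Mw) * θ ^ k + δ / (1 - θ)) atTop
      (𝓝 (δ / (1 - θ))) := by
    have h := (tendsto_pow_atTop_nhds_zero_of_lt_one hθ0 hθ1).const_mul (Mv + Mw)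
    have := h.add_const (δ / (1 - θ))
    simpa using this
  exact ge_of_tendsto' hlim (fun k => key k n)

/-- Uniqueness of bounded backward orbits. -/
lemma orbit_unique (ha : 0 ≤ a) (hb : 0 ≤ b) (he : 0 ≤ e)
    (hθ1 : max (a * (1 + e)) (b + e) < 1)
    (hA : ∀ y : E, ‖A.symm y‖ ≤ a * ‖y‖)
    (hB : ∀ y : F, ‖B y‖ ≤ b * ‖y‖)
    (hgL : ∀ (n : ℕ) (x y : E × F), ‖g (t + n + 1) x - g (t + n + 1) y‖ ≤ e * ‖x - y‖)
    (v w : ℕ → E × F) (hv : IsOrbit A B g t u v) (hw : IsOrbit A B g t u w)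
    (Mv : ℝ) (hMv : ∀ n, ‖v n‖ ≤ Mv) (Mw : ℝ) (hMw : ∀ n, ‖w n‖ ≤ Mw) :
    v = w := by
  funext n
  have := orbit_dist ha hb he hθ1 hA hB hgL v w hv hw Mv hMv Mw hMw n
  rw [sub_self, norm_zero, zero_div] at this
  have := le_antisymm this (norm_nonneg _)
  rw [norm_eq_zero, sub_eq_zero] at this
  exact this

/-- Decay of the fiber component of a bounded backward orbit. -/
lemma orbit_snd_decay (hb : 0 ≤ b) (hb1 : b < 1)
    (hB : ∀ y : F, ‖B y‖ ≤ b * ‖y‖)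
    (ρ : ℝ → ℝ) (hρanti : Antitone ρ) (hρnn : ∀ s, 0 ≤ ρ s)
    (c : ℝ) (hc : 0 ≤ c)
    (hgB : ∀ (n : ℕ) (x : E × F), ‖g (t + n + 1) x‖ ≤ c * ρ (t + n + 1))
    (v : ℕ → E × F) (hv : IsOrbit A B g t u v) (M : ℝ) (hM : ∀ n, ‖v n‖ ≤ M) :
    ∀ n : ℕ, ‖(v n).2‖ ≤ c / (1 - b) * ρ (t + n) := by
  have hb' : 0 < 1 - b := by linarith
  have key : ∀ N n : ℕ, ‖(v n).2‖ ≤ M * b ^ N + c / (1 - b) * ρ (t + n) := by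
    intro N
    induction N with
    | zero =>
      intro n
      have h1 : ‖(v n).2‖ ≤ M := le_trans (norm_snd_le _) (hM n)
      have h2 : 0 ≤ c / (1 - b) * ρ (t + n) := by
        have := hρnn (t + n); positivity
      simpa using le_trans h1 (by linarith)
    | succ N ih =>
      intro n
      have hrel := (hv.2 n).2
      have hρle : ρ (t + n + 1) ≤ ρ (t + n) := by
        apply hρanti; linarith
      have h1 : ‖(v n).2‖ ≤ b * ‖(v (n+1)).2‖ + c * ρ (t + n + 1) := by
        rw [hrel]
        refine le_trans (norm_add_le _ _) (add_le_add (hB _) ?_)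
        exact le_trans (norm_snd_le _) (hgB n _)
      have h2 : ‖(v (n+1)).2‖ ≤ M * b ^ N + c / (1 - b) * ρ (t + n + 1) := by
        have := ih (n+1)
        have hcast : (t + (↑(n+1) : ℝ)) = t + n + 1 := by push_cast; ring
        rwa [hcast] at this
      have h3 : b * (c / (1 - b)) + c = c / (1 - b) := by
        field_simp; ring
      have hρnn' : 0 ≤ ρ (t + n + 1) := hρnn _
      calc ‖(v n).2‖ ≤ b * (M * b ^ N + c / (1 - b) * ρ (t + n + 1)) + c * ρ (t + n + 1) := by
            nlinarith
        _ = M * b ^ (N+1) + (b * (c / (1 - b)) + c) * ρ (t + n + 1) := by ring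
        _ = M * b ^ (N+1) + c / (1 - b) * ρ (t + n + 1) := by rw [h3]
        _ ≤ M * b ^ (N+1) + c / (1 - b) * ρ (t + n) := by
            have : 0 ≤ c / (1 - b) := by positivity
            nlinarith
  intro n
  have hlim : Tendsto (fun N : ℕ => M * b ^ N + c / (1 - b) * ρ (t + n)) atTop
      (𝓝 (c / (1 - b) * ρ (t + n))) := by
    have h := (tendsto_pow_atTop_nhds_zero_of_lt_one hb hb1).const_mul M
    have := h.add_const (c / (1 - b) * ρ (t + n))
    simpa using this
  exact ge_of_tendsto' hlim (fun N => key N n)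

/-- Weighted Lipschitz estimate for the fiber components of two orbits. -/
lemma orbit_snd_diff (hb : 0 ≤ b) (hb1 : b < 1)
    (hB : ∀ y : F, ‖B y‖ ≤ b * ‖y‖)
    (ρ : ℝ → ℝ) (hρanti : Antitone ρ) (hρnn : ∀ s, 0 ≤ ρ s)
    (c : ℝ) (hc : 0 ≤ c)
    (hgL : ∀ (n : ℕ) (x y : E × F),
      ‖g (t + n + 1) x - g (t + n + 1) y‖ ≤ c * ρ (t + n + 1) * ‖x - y‖)
    (v w : ℕ → E × F) (hv : IsOrbit A B g t u v) (hw : IsOrbit A B g t u' w)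
    (C₂ : ℝ) (hC₂ : 0 ≤ C₂)
    (hv2 : ∀ n : ℕ, ‖(v n).2‖ ≤ C₂ * ρ (t + n)) (hw2 : ∀ n : ℕ, ‖(w n).2‖ ≤ C₂ * ρ (t + n))
    (D : ℝ) (hD : 0 ≤ D) (hd : ∀ n, ‖v n - w n‖ ≤ D) :
    ∀ n : ℕ, ‖(v n).2 - (w n).2‖ ≤ c * D / (1 - b) * ρ (t + n) := by
  have hb' : 0 < 1 - b := by linarith
  have key : ∀ N n : ℕ, ‖(v n).2 - (w n).2‖
      ≤ 2 * C₂ * ρ (t + n) * b ^ N + c * D / (1 - b) * ρ (t + n) := by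
    intro N
    induction N with
    | zero =>
      intro n
      have h1 : ‖(v n).2 - (w n).2‖ ≤ 2 * C₂ * ρ (t + n) :=
        le_trans (norm_sub_le _ _) (by linarith [hv2 n, hw2 n])
      have h2 : 0 ≤ c * D / (1 - b) * ρ (t + n) := by
        have := hρnn (t + n); positivity
      simpa using le_trans h1 (by linarith)
    | succ N ih =>
      intro n
      have hρle : ρ (t + n + 1) ≤ ρ (t + n) := by apply hρanti; linarith
      have hρnn' : 0 ≤ ρ (t + n + 1) := hρnn _
      have h1 : ‖(v n).2 - (w n).2‖
          ≤ b * ‖(v (n+1)).2 - (w (n+1)).2‖ + c * ρ (t + n + 1) * D := by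
        rw [(hv.2 n).2, (hw.2 n).2]
        have keyeq : B ((v (n+1)).2) + (g (t + n + 1) (v (n+1))).2
            - (B ((w (n+1)).2) + (g (t + n + 1) (w (n+1))).2)
            = B ((v (n+1)).2 - (w (n+1)).2)
              + ((g (t + n + 1) (v (n+1))) - (g (t + n + 1) (w (n+1)))).2 := by
          rw [map_sub, Prod.snd_sub]; abel
        rw [keyeq]
        refine le_trans (norm_add_le _ _) (add_le_add (hB _) ?_)
        refine le_trans (norm_snd_le _) (le_trans (hgL n _ _) ?_)
        have h0 : 0 ≤ c * ρ (t + n + 1) := by positivity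
        exact mul_le_mul_of_nonneg_left (hd (n+1)) h0
      have h2 : ‖(v (n+1)).2 - (w (n+1)).2‖
          ≤ 2 * C₂ * ρ (t + n + 1) * b ^ N + c * D / (1 - b) * ρ (t + n + 1) := by
        have := ih (n+1)
        have hcast : (t + (↑(n+1) : ℝ)) = t + n + 1 := by push_cast; ring
        rwa [hcast] at this
      have h3 : b * (c * D / (1 - b)) + c * D = c * D / (1 - b) := by
        field_simp; ring
      have hbN : 0 ≤ b ^ N := pow_nonneg hb N
      calc ‖(v n).2 - (w n).2‖
          ≤ b * (2 * C₂ * ρ (t + n + 1) * b ^ N + c * D / (1 - b) * ρ (t + n + 1))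
            + c * ρ (t + n + 1) * D := by nlinarith
        _ = 2 * C₂ * ρ (t + n + 1) * b ^ (N+1)
            + (b * (c * D / (1 - b)) + c * D) * ρ (t + n + 1) := by ring
        _ = 2 * C₂ * ρ (t + n + 1) * b ^ (N+1) + c * D / (1 - b) * ρ (t + n + 1) := by
            rw [h3]
        _ ≤ 2 * C₂ * ρ (t + n) * b ^ (N+1) + c * D / (1 - b) * ρ (t + n) := by
            have h4 : 0 ≤ c * D / (1 - b) := by positivity
            have h5 : 0 ≤ b ^ (N+1) := pow_nonneg hb _
            nlinarith [mul_nonneg (mul_nonneg (by linarith : (0:ℝ) ≤ 2 * C₂) h5)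
                (sub_nonneg.2 hρle), mul_nonneg h4 (sub_nonneg.2 hρle)]
  intro n
  have hlim : Tendsto (fun N : ℕ => 2 * C₂ * ρ (t + n) * b ^ N
      + c * D / (1 - b) * ρ (t + n)) atTop (𝓝 (c * D / (1 - b) * ρ (t + n))) := by
    have h := (tendsto_pow_atTop_nhds_zero_of_lt_one hb hb1).const_mul (2 * C₂ * ρ (t + n))
    have := h.add_const (c * D / (1 - b) * ρ (t + n))
    simpa using this
  exact ge_of_tendsto' hlim (fun N => key N n)

/-- Shifting a backward orbit one step forward in time. -/
lemma IsOrbit.shift {v : ℕ → E × F} (hv : IsOrbit A B g t u v) :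
    IsOrbit A B g (t + 1) ((v 1).1) (fun n => v (n+1)) := by
  refine ⟨rfl, fun n => ?_⟩
  have := hv.2 (n+1)
  have hcast : (t + (↑(n+1) : ℝ) + 1) = t + 1 + n + 1 := by push_cast; ring
  rw [hcast] at this
  exact this

/-- Prepending one backward step to an orbit. -/
lemma IsOrbit.prepend {v : ℕ → E × F} (hv : IsOrbit A B g t u v) :
    IsOrbit A B g (t - 1) (A ((v 0).1) + (g t (v 0)).1)
      (fun n => Nat.casesOn n
        (A ((v 0).1) + (g t (v 0)).1, B ((v 0).2) + (g t (v 0)).2) v) := by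
  refine ⟨rfl, fun n => ?_⟩
  cases n with
  | zero =>
    have hcast : (t - 1 + (↑(0:ℕ) : ℝ) + 1) = t := by push_cast; ring
    rw [hcast]
    exact ⟨rfl, rfl⟩
  | succ m =>
    have := hv.2 m
    have hcast : (t - 1 + (↑(m+1) : ℝ) + 1) = t + m + 1 := by push_cast; ring
    rw [hcast]
    exact this

end EUMAux

open EUMAux in
/-- Euclidean-model unstable manifold for a decaying perturbation of a
hyperbolic map: existence, decay, weighted Lipschitz bounds, invariance of the
graph, and uniqueness. -/
theorem euclidean_model_unstable_manifold
    (p q : ℕ) (hp : 1 ≤ p) (hq : 1 ≤ q)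
    (lam kap : ℝ) (hlam : 1 < lam) (hkap0 : 0 ≤ kap) (hkap1 : kap < 1)
    (A : EuclideanSpace ℝ (Fin p) ≃L[ℝ] EuclideanSpace ℝ (Fin p))
    (hA : ‖(A.symm : EuclideanSpace ℝ (Fin p) →L[ℝ] EuclideanSpace ℝ (Fin p))‖ ≤ lam⁻¹)
    (B : EuclideanSpace ℝ (Fin q) →L[ℝ] EuclideanSpace ℝ (Fin q))
    (hB : ‖B‖ ≤ kap)
    (ρ : ℝ → ℝ) (hρpos : ∀ t, 0 < ρ t) (hρanti : Antitone ρ)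
    (hρ0 : Filter.Tendsto ρ Filter.atTop (nhds 0))
    (Ct : ℝ) (hCt : 0 ≤ Ct)
    (g : ℝ → EuclideanSpace ℝ (Fin p) × EuclideanSpace ℝ (Fin q) →
      EuclideanSpace ℝ (Fin p) × EuclideanSpace ℝ (Fin q))
    (hgbdd : ∀ t v, ‖g t v‖ ≤ Ct * ρ t)
    (hgLip : ∀ t v v', ‖g t v - g t v'‖ ≤ Ct * ρ t * ‖v - v'‖)
    (f : ℝ × EuclideanSpace ℝ (Fin p) × EuclideanSpace ℝ (Fin q) →
      ℝ × EuclideanSpace ℝ (Fin p) × EuclideanSpace ℝ (Fin q))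
    (hf : ∀ t u s, f (t, u, s) = (t - 1, A u + (g t (u, s)).1, B s + (g t (u, s)).2)) :
    ∃ (t₁ C : ℝ) (σ : ℝ → EuclideanSpace ℝ (Fin p) → EuclideanSpace ℝ (Fin q)),
      0 ≤ C ∧
      (∀ t u, t₁ < t → ‖σ t u‖ ≤ C * ρ t) ∧
      (∀ t u u', t₁ < t → ‖σ t u - σ t u'‖ ≤ C * ρ t * ‖u - u'‖) ∧
      (f '' {w : ℝ × EuclideanSpace ℝ (Fin p) × EuclideanSpace ℝ (Fin q) |
          t₁ + 1 < w.1 ∧ w.2.2 = σ w.1 w.2.1} =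
        {w : ℝ × EuclideanSpace ℝ (Fin p) × EuclideanSpace ℝ (Fin q) |
          t₁ < w.1 ∧ w.2.2 = σ w.1 w.2.1}) ∧
      (∀ (C' : ℝ) (σ' : ℝ → EuclideanSpace ℝ (Fin p) → EuclideanSpace ℝ (Fin q)),
        0 ≤ C' →
        (∀ t u, t₁ < t → ‖σ' t u‖ ≤ C' * ρ t) →
        (∀ t u u', t₁ < t → ‖σ' t u - σ' t u'‖ ≤ C' * ρ t * ‖u - u'‖) →
        (f '' {w : ℝ × EuclideanSpace ℝ (Fin p) × EuclideanSpace ℝ (Fin q) |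
            t₁ + 1 < w.1 ∧ w.2.2 = σ' w.1 w.2.1} =
          {w : ℝ × EuclideanSpace ℝ (Fin p) × EuclideanSpace ℝ (Fin q) |
            t₁ < w.1 ∧ w.2.2 = σ' w.1 w.2.1}) →
        ∀ t u, t₁ < t → σ' t u = σ t u) := by
  classical
  have hlam0 : 0 < lam := lt_trans one_pos hlam
  have hlaminv1 : lam⁻¹ < 1 := by
    rw [inv_lt_one_iff₀]; right; exact hlam
  have hlaminv0 : 0 ≤ lam⁻¹ := by positivity
  -- the smallness parameter ε and the contraction factor θ
  obtain ⟨ε, hε, hε1, hε2⟩ : ∃ ε : ℝ, 0 < ε ∧ ε ≤ (1 - lam⁻¹) / 2 ∧ ε ≤ (1 - kap) / 2 := by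
    refine ⟨min ((1 - lam⁻¹) / 2) ((1 - kap) / 2), ?_, min_le_left _ _, min_le_right _ _⟩
    apply lt_min <;> linarith
  have hθ0 : 0 ≤ max (lam⁻¹ * (1 + ε)) (kap + ε) :=
    le_max_of_le_right (by linarith)
  have hθ1 : max (lam⁻¹ * (1 + ε)) (kap + ε) < 1 := by
    have hle : lam⁻¹ * ε ≤ ε := mul_le_of_le_one_left hε.le hlaminv1.le
    apply max_lt <;> nlinarith
  have hθpos : 0 < 1 - max (lam⁻¹ * (1 + ε)) (kap + ε) := by linarith
  -- choose t₁ so that Ct * ρ s ≤ ε beyond t₁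
  have htend : Tendsto (fun s => Ct * ρ s) atTop (𝓝 0) := by
    have := hρ0.const_mul Ct
    simpa using this
  obtain ⟨t₁, ht₁⟩ := Filter.eventually_atTop.1 (htend.eventually (gt_mem_nhds hε))
  have hgε : ∀ s, t₁ < s → Ct * ρ s ≤ ε := fun s hs => le_of_lt (ht₁ s hs.le)
  -- operator norm bounds
  have hA' : ∀ y, ‖A.symm y‖ ≤ lam⁻¹ * ‖y‖ := by
    intro y
    have h1 := (A.symm : EuclideanSpace ℝ (Fin p) →L[ℝ] EuclideanSpace ℝ (Fin p)).le_opNorm y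
    simp only [ContinuousLinearEquiv.coe_coe] at h1
    exact h1.trans (mul_le_mul_of_nonneg_right hA (norm_nonneg y))
  have hB' : ∀ y, ‖B y‖ ≤ kap * ‖y‖ := fun y =>
    (B.le_opNorm y).trans (mul_le_mul_of_nonneg_right hB (norm_nonneg y))
  -- per-time smallness of g
  have hts : ∀ (t : ℝ), t₁ < t → ∀ n : ℕ, t₁ < t + n + 1 := by
    intro t ht n
    have : (0:ℝ) ≤ n := Nat.cast_nonneg n
    linarith
  have hgL' : ∀ (t : ℝ), t₁ < t → ∀ (n : ℕ) x y,
      ‖g (t + n + 1) x - g (t + n + 1) y‖ ≤ ε * ‖x - y‖ := fun t ht n x y =>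
    le_trans (hgLip _ x y) (mul_le_mul_of_nonneg_right (hgε _ (hts t ht n)) (norm_nonneg _))
  have hgB' : ∀ (t : ℝ), t₁ < t → ∀ (n : ℕ) x, ‖g (t + n + 1) x‖ ≤ ε := fun t ht n x =>
    le_trans (hgbdd _ x) (hgε _ (hts t ht n))
  -- existence of bounded backward orbits
  have hex : ∀ (t : ℝ) (u : EuclideanSpace ℝ (Fin p)), t₁ < t →
      ∃ v, IsOrbit A B g t u v ∧ ∃ M : ℝ, ∀ n, ‖v n‖ ≤ M := fun t u ht =>
    exists_orbit hlaminv0 hkap0 hε.le hθ1 hA' hB' (hgL' t ht) ε hε.le (hgB' t ht)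
  choose orb horb orbBdd using hex
  -- uniqueness of bounded backward orbits
  have huniq : ∀ (t : ℝ) (u) (h : t₁ < t) (v : ℕ → _),
      IsOrbit A B g t u v → (∃ M : ℝ, ∀ n, ‖v n‖ ≤ M) → v = orb t u h := by
    rintro t u h v hv ⟨M, hM⟩
    obtain ⟨M', hM'⟩ := orbBdd t u h
    exact orbit_unique hlaminv0 hkap0 hε.le hθ1 hA' hB' (hgL' t h)
      v (orb t u h) hv (horb t u h) M hM M' hM'
  -- fiber decay along orbits
  have hdecay : ∀ (t : ℝ) (u) (h : t₁ < t) (n : ℕ),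
      ‖(orb t u h n).2‖ ≤ Ct / (1 - kap) * ρ (t + n) := by
    intro t u h
    obtain ⟨M, hM⟩ := orbBdd t u h
    exact orbit_snd_decay hkap0 hkap1 hB' ρ hρanti (fun s => (hρpos s).le) Ct hCt
      (fun n x => hgbdd _ x) (orb t u h) (horb t u h) M hM
  -- the graph function
  set σ : ℝ → EuclideanSpace ℝ (Fin p) → EuclideanSpace ℝ (Fin q) :=
    fun t u => if h : t₁ < t then (orb t u h 0).2 else 0 with hσdef
  have hσ : ∀ (t : ℝ) (u) (h : t₁ < t), σ t u = (orb t u h 0).2 := by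
    intro t u h
    show (if h' : t₁ < t then (orb t u h' 0).2 else 0) = (orb t u h 0).2
    exact dif_pos h
  refine ⟨t₁, Ct / ((1 - kap) * (1 - max (lam⁻¹ * (1 + ε)) (kap + ε))), σ, ?_, ?_, ?_, ?_, ?_⟩
  · -- 0 ≤ C
    apply div_nonneg hCt
    nlinarith
  · -- decay bound
    intro t u ht
    rw [hσ t u ht]
    have h0 := hdecay t u ht 0
    simp only [Nat.cast_zero, add_zero] at h0
    refine h0.trans ?_
    have h1 : Ct / (1 - kap) ≤ Ct / ((1 - kap) * (1 - max (lam⁻¹ * (1 + ε)) (kap + ε))) := by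
      rw [← div_div]
      exact le_div_self (div_nonneg hCt (by linarith)) hθpos (by linarith)
    exact mul_le_mul_of_nonneg_right h1 (hρpos t).le
  · -- weighted Lipschitz bound
    intro t u u' ht
    rw [hσ t u ht, hσ t u' ht]
    obtain ⟨Mv, hMv⟩ := orbBdd t u ht
    obtain ⟨Mw, hMw⟩ := orbBdd t u' ht
    have hD := orbit_dist hlaminv0 hkap0 hε.le hθ1 hA' hB' (hgL' t ht)
      (orb t u ht) (orb t u' ht) (horb t u ht) (horb t u' ht) Mv hMv Mw hMw
    have hD0 : 0 ≤ ‖u - u'‖ / (1 - max (lam⁻¹ * (1 + ε)) (kap + ε)) :=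
      div_nonneg (norm_nonneg _) hθpos.le
    have hdiff := orbit_snd_diff hkap0 hkap1 hB' ρ hρanti (fun s => (hρpos s).le) Ct hCt
      (fun n x y => hgLip _ x y) (orb t u ht) (orb t u' ht) (horb t u ht) (horb t u' ht)
      (Ct / (1 - kap)) (div_nonneg hCt (by linarith)) (hdecay t u ht) (hdecay t u' ht)
      (‖u - u'‖ / (1 - max (lam⁻¹ * (1 + ε)) (kap + ε))) hD0 hD 0
    simp only [Nat.cast_zero, add_zero] at hdiff
    refine hdiff.trans (le_of_eq ?_)
    field_simp
  · -- invariance of the graph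
    ext ⟨s, x, y⟩
    simp only [Set.mem_image, Set.mem_setOf_eq]
    constructor
    · rintro ⟨⟨s', x', y'⟩, ⟨hs', hy'⟩, hfw⟩
      rw [hf] at hfw
      simp only [Prod.mk.injEq] at hfw
      obtain ⟨hts', htx, hty⟩ := hfw
      have hs'1 : t₁ < s' := by linarith
      have hv0 : orb s' x' hs'1 0 = (x', y') := by
        refine Prod.ext (horb s' x' hs'1).1 ?_
        show (orb s' x' hs'1 0).2 = y'
        rw [← hσ s' x' hs'1, ← hy']
      have h' : t₁ < s' - 1 := by linarith
      set W : ℕ → EuclideanSpace ℝ (Fin p) × EuclideanSpace ℝ (Fin q) :=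
        fun n => Nat.casesOn
          (motive := fun _ => EuclideanSpace ℝ (Fin p) × EuclideanSpace ℝ (Fin q)) n
          (A ((orb s' x' hs'1 0).1) + (g s' (orb s' x' hs'1 0)).1,
           B ((orb s' x' hs'1 0).2) + (g s' (orb s' x' hs'1 0)).2)
          (orb s' x' hs'1) with hWdef
      have hpre : IsOrbit A B g (s' - 1)
          (A ((orb s' x' hs'1 0).1) + (g s' (orb s' x' hs'1 0)).1) W :=
        (horb s' x' hs'1).prepend
      obtain ⟨M, hM⟩ := orbBdd s' x' hs'1
      have hWbdd : ∃ M' : ℝ, ∀ n, ‖W n‖ ≤ M' := by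
        refine ⟨max (‖W 0‖) M, fun n => ?_⟩
        cases n with
        | zero => exact le_max_left _ _
        | succ m => exact le_trans (hM m) (le_max_right _ _)
      have hWuniq := huniq (s' - 1) _ h' _ hpre hWbdd
      have hσW : σ (s' - 1) (A ((orb s' x' hs'1 0).1) + (g s' (orb s' x' hs'1 0)).1)
          = B ((orb s' x' hs'1 0).2) + (g s' (orb s' x' hs'1 0)).2 := by
        rw [hσ _ _ h', ← hWuniq, hWdef]
        rfl
      rw [hv0] at hσW
      refine ⟨by linarith, ?_⟩
      rw [← hts', ← htx, ← hty]
      exact hσW.symm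
    · rintro ⟨hs, hy⟩
      have h1 : t₁ < s + 1 := by linarith
      have hshift : IsOrbit A B g (s + 1) ((orb s x hs 1).1)
          (fun n => orb s x hs (n + 1)) := (horb s x hs).shift
      obtain ⟨M, hM⟩ := orbBdd s x hs
      have hWuniq := huniq (s + 1) _ h1 _ hshift ⟨M, fun n => hM (n + 1)⟩
      have hσ1 : σ (s + 1) ((orb s x hs 1).1) = (orb s x hs 1).2 := by
        rw [hσ _ _ h1, ← hWuniq]
      refine ⟨(s + 1, (orb s x hs 1).1, (orb s x hs 1).2),
        ⟨show t₁ + 1 < s + 1 by linarith, hσ1.symm⟩, ?_⟩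
      rw [hf]
      have hrel := (horb s x hs).2 0
      have hc : (s + ((0:ℕ):ℝ) + 1) = s + 1 := by norm_num
      rw [hc] at hrel
      have hx0 : (orb s x hs 0).1 = x := (horb s x hs).1
      have hy0 : (orb s x hs 0).2 = y := by rw [← hσ s x hs, ← hy]
      simp only [Prod.mk.injEq]
      exact ⟨by ring, hrel.1.symm.trans hx0, hrel.2.symm.trans hy0⟩
  · -- uniqueness
    intro C' σ' hC'0 hσ'b hσ'lip hinv' t u ht
    have hnext : ∀ (s : ℝ) (x : EuclideanSpace ℝ (Fin p)), t₁ < s →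
        ∃ x₁, x = A x₁ + (g (s + 1) (x₁, σ' (s + 1) x₁)).1 ∧
          σ' s x = B (σ' (s + 1) x₁) + (g (s + 1) (x₁, σ' (s + 1) x₁)).2 := by
      intro s x hs
      have hmem : (s, x, σ' s x) ∈
          {w : ℝ × EuclideanSpace ℝ (Fin p) × EuclideanSpace ℝ (Fin q) |
            t₁ < w.1 ∧ w.2.2 = σ' w.1 w.2.1} := ⟨hs, rfl⟩
      rw [← hinv'] at hmem
      obtain ⟨⟨s₁, x₁, y₁⟩, ⟨hs₁, hy₁⟩, hfeq⟩ := hmem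
      simp only at hy₁
      subst hy₁
      rw [hf] at hfeq
      simp only [Prod.mk.injEq] at hfeq
      obtain ⟨h1, h2, h3⟩ := hfeq
      have hs₁s : s₁ = s + 1 := by linarith
      refine ⟨x₁, ?_, ?_⟩
      · rw [← hs₁s]; exact h2.symm
      · rw [← hs₁s]; exact h3.symm
    choose nxt hnxt1 hnxt2 using hnext
    have htn : ∀ n : ℕ, t₁ < t + n := fun n => by
      have : (0:ℝ) ≤ n := Nat.cast_nonneg n
      linarith
    set us : ℕ → EuclideanSpace ℝ (Fin p) := fun n =>
      Nat.rec (motive := fun _ => EuclideanSpace ℝ (Fin p)) u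
        (fun m x => nxt (t + m) x (htn m)) n with husdef
    have hus0 : us 0 = u := rfl
    have hussucc : ∀ n : ℕ, us (n + 1) = nxt (t + n) (us n) (htn n) := fun n => rfl
    have hvsorb : IsOrbit A B g t u
        (fun n => (us n, σ' (t + n) (us n))) := by
      refine ⟨rfl, fun n => ?_⟩
      have h1 := hnxt1 (t + n) (us n) (htn n)
      have h2 := hnxt2 (t + n) (us n) (htn n)
      rw [← hussucc n] at h1 h2
      have hcast2 : (t + ((n:ℝ) + 1)) = t + n + 1 := by ring
      have hcast3 : (t + (((n+1:ℕ)):ℝ)) = t + n + 1 := by push_cast; ring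
      constructor
      · show us n = A (us (n+1)) + (g (t + n + 1) (us (n+1), σ' (t + ((n+1:ℕ):ℝ)) (us (n+1)))).1
        rw [hcast3]
        exact h1
      · show σ' (t + n) (us n)
          = B (σ' (t + ((n+1:ℕ):ℝ)) (us (n+1)))
            + (g (t + n + 1) (us (n+1), σ' (t + ((n+1:ℕ):ℝ)) (us (n+1)))).2
        rw [hcast3]
        exact h2
    have hlamp : 0 < 1 - lam⁻¹ := by linarith
    have husbd : ∀ n, ‖us n‖ ≤ ‖u‖ + ε / (1 - lam⁻¹) := by
      intro n
      induction n with
      | zero =>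
        rw [hus0]
        have : 0 ≤ ε / (1 - lam⁻¹) := by positivity
        linarith
      | succ n ih =>
        have h1 := hnxt1 (t + n) (us n) (htn n)
        rw [← hussucc n] at h1
        have h2 : us (n + 1) = A.symm (us n
            - (g ((t + n) + 1) (us (n+1), σ' ((t + n) + 1) (us (n+1)))).1) := by
          rw [eq_comm, ContinuousLinearEquiv.symm_apply_eq]
          rw [h1]
          abel
        have hg1 : ‖(g ((t + n) + 1) (us (n+1), σ' ((t + n) + 1) (us (n+1)))).1‖ ≤ ε :=
          le_trans (norm_fst_le _) (hgB' t ht n _)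
        have hKid : (1 - lam⁻¹) * (ε / (1 - lam⁻¹)) = ε :=
          mul_div_cancel₀ ε (ne_of_gt hlamp)
        have hle : lam⁻¹ * ε ≤ ε := mul_le_of_le_one_left hε.le hlaminv1.le
        calc ‖us (n+1)‖ = ‖A.symm (us n
            - (g ((t + n) + 1) (us (n+1), σ' ((t + n) + 1) (us (n+1)))).1)‖ := by rw [← h2]
          _ ≤ lam⁻¹ * ‖us n - (g ((t + n) + 1) (us (n+1), σ' ((t + n) + 1) (us (n+1)))).1‖ :=
              hA' _
          _ ≤ lam⁻¹ * ((‖u‖ + ε / (1 - lam⁻¹)) + ε) := by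
              refine mul_le_mul_of_nonneg_left (le_trans (norm_sub_le _ _) ?_) hlaminv0
              linarith
          _ ≤ ‖u‖ + ε / (1 - lam⁻¹) := by nlinarith [norm_nonneg u, hKid, hle]
    have hvsbd : ∃ M : ℝ, ∀ n, ‖((us n, σ' (t + n) (us n)) :
        EuclideanSpace ℝ (Fin p) × EuclideanSpace ℝ (Fin q))‖ ≤ M := by
      refine ⟨max (‖u‖ + ε / (1 - lam⁻¹)) (C' * ρ t), fun n => ?_⟩
      rw [Prod.norm_def]
      apply max_le
      · exact le_trans (husbd n) (le_max_left _ _)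
      · refine le_trans (hσ'b (t + n) (us n) (htn n)) (le_trans ?_ (le_max_right _ _))
        refine mul_le_mul_of_nonneg_left (hρanti ?_) hC'0
        have : (0:ℝ) ≤ n := Nat.cast_nonneg n
        linarith
    have hWuniq := huniq t u ht _ hvsorb hvsbd
    have : σ' (t + ((0:ℕ):ℝ)) (us 0) = (orb t u ht 0).2 := by
      rw [← hWuniq]
    rw [hσ t u ht, ← this, hus0]
    norm_num
end

section
/- Graph structure of a perturbed zero set with cusp-conormal bounds (local-coordinate version): Let α > 0, τ₀ > 0, k ≥ 0, C ≥ 0, and let p̃: (0,τ₀] × ℝ × ℝ^k → ℝ be continuously differentiable with |p̃(τ,x⁰,x')| ≤ C·τ^α, |∂_{x⁰} p̃(τ,x⁰,x')| ≤ C·τ^α, ‖∂_{x'} p̃(τ,x⁰,x')‖ ≤ C·τ^α, and |τ²·∂_τ p̃(τ,x⁰,x')| ≤ C·τ^α for all (τ,x⁰,x'). Set p(τ,x⁰,x') := x⁰ + p̃(τ,x⁰,x'). Then there exists τ₁ ∈ (0,τ₀] with C·τ₁^α ≤ 1/2 and a continuously differentiable function f: (0,τ₁] × ℝ^k → ℝ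 such that for every τ ∈ (0,τ₁]: (i) for each x' ∈ ℝ^k, f(τ,x') is the unique real number x⁰ with p(τ,x⁰,x') = 0 (so the zero set of p(τ,·,·) is exactly the graph of f(τ,·)); (ii) |f(τ,x')| ≤ C·τ^α; (iii) ‖∂_{x'} f(τ,x')‖ ≤ 2C·τ^α; (iv) |τ²·∂_τ f(τ,x')| ≤ 2C·τ^α. -/
namespace PerturbAux

open ContinuousLinearMap

variable (k : ℕ)

def pτ : (ℝ × ℝ × (Fin k → ℝ)) →L[ℝ] ℝ :=
  ContinuousLinearMap.fst ℝ ℝ (ℝ × (Fin k → ℝ))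

def px0 : (ℝ × ℝ × (Fin k → ℝ)) →L[ℝ] ℝ :=
  (ContinuousLinearMap.fst ℝ ℝ (Fin k → ℝ)).comp
    (ContinuousLinearMap.snd ℝ ℝ (ℝ × (Fin k → ℝ)))

def px' : (ℝ × ℝ × (Fin k → ℝ)) →L[ℝ] (Fin k → ℝ) :=
  (ContinuousLinearMap.snd ℝ ℝ (Fin k → ℝ)).comp
    (ContinuousLinearMap.snd ℝ ℝ (ℝ × (Fin k → ℝ)))

def K : (ℝ × ℝ × (Fin k → ℝ)) →L[ℝ] (ℝ × ℝ × (Fin k → ℝ)) :=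
  (pτ k).prod ((0 : (ℝ × ℝ × (Fin k → ℝ)) →L[ℝ] ℝ).prod (px' k))

def J : (ℝ × (Fin k → ℝ)) →L[ℝ] (ℝ × ℝ × (Fin k → ℝ)) :=
  (ContinuousLinearMap.fst ℝ ℝ (Fin k → ℝ)).prod
    ((0 : (ℝ × (Fin k → ℝ)) →L[ℝ] ℝ).prod (ContinuousLinearMap.snd ℝ ℝ (Fin k → ℝ)))

@[simp] lemma J_apply (v : ℝ × (Fin k → ℝ)) : J k v = (v.1, 0, v.2) := rfl
@[simp] lemma K_apply (v : ℝ × ℝ × (Fin k → ℝ)) : K k v = (v.1, 0, v.2.2) := rfl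
@[simp] lemma pτ_apply (v : ℝ × ℝ × (Fin k → ℝ)) : pτ k v = v.1 := rfl
@[simp] lemma px0_apply (v : ℝ × ℝ × (Fin k → ℝ)) : px0 k v = v.2.1 := rfl
@[simp] lemma px'_apply (v : ℝ × ℝ × (Fin k → ℝ)) : px' k v = v.2.2 := rfl

variable {k}

lemma decomp (D : (ℝ × ℝ × (Fin k → ℝ)) →L[ℝ] ℝ) (a b : ℝ) (c : Fin k → ℝ) :
    D (a, b, c) = b * D (0, 1, 0) + D (a, 0, c) := by
  have h : ((a, b, c) : ℝ × ℝ × (Fin k → ℝ))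
      = b • ((0 : ℝ), (1 : ℝ), (0 : Fin k → ℝ)) + ((a : ℝ), (0 : ℝ), c) := by
    simp [Prod.ext_iff]
  rw [h, map_add, map_smul, smul_eq_mul]

variable (k)

def Fwd (D : (ℝ × ℝ × (Fin k → ℝ)) →L[ℝ] ℝ) :
    (ℝ × ℝ × (Fin k → ℝ)) →L[ℝ] (ℝ × ℝ × (Fin k → ℝ)) :=
  (pτ k).prod ((px0 k + D).prod (px' k))

noncomputable def Inv (D : (ℝ × ℝ × (Fin k → ℝ)) →L[ℝ] ℝ) :
    (ℝ × ℝ × (Fin k → ℝ)) →L[ℝ] (ℝ × ℝ × (Fin k → ℝ)) :=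
  (pτ k).prod (((1 + D (0, 1, 0))⁻¹ • (px0 k - D.comp (K k))).prod (px' k))

@[simp] lemma Fwd_apply (D : (ℝ × ℝ × (Fin k → ℝ)) →L[ℝ] ℝ) (v : ℝ × ℝ × (Fin k → ℝ)) :
    Fwd k D v = (v.1, v.2.1 + D v, v.2.2) := rfl

@[simp] lemma Inv_apply (D : (ℝ × ℝ × (Fin k → ℝ)) →L[ℝ] ℝ) (v : ℝ × ℝ × (Fin k → ℝ)) :
    Inv k D v = (v.1, (1 + D (0, 1, 0))⁻¹ * (v.2.1 - D (v.1, 0, v.2.2)), v.2.2) := rfl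

variable {k}

noncomputable def perturbEquiv (D : (ℝ × ℝ × (Fin k → ℝ)) →L[ℝ] ℝ)
    (h : 1 + D (0, 1, 0) ≠ 0) :
    (ℝ × ℝ × (Fin k → ℝ)) ≃L[ℝ] (ℝ × ℝ × (Fin k → ℝ)) :=
  ContinuousLinearEquiv.equivOfInverse (Fwd k D) (Inv k D)
    (by
      rintro ⟨a, b, c⟩
      simp only [Fwd_apply, Inv_apply]
      refine Prod.ext rfl (Prod.ext ?_ rfl)
      simp only
      rw [decomp D a b c]
      field_simp
      ring)
    (by
      rintro ⟨a, b, c⟩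
      simp only [Fwd_apply, Inv_apply]
      refine Prod.ext rfl (Prod.ext ?_ rfl)
      simp only
      rw [decomp D a ((1 + D (0, 1, 0))⁻¹ * (b - D (a, 0, c))) c]
      field_simp
      ring)

lemma perturbEquiv_coe (D : (ℝ × ℝ × (Fin k → ℝ)) →L[ℝ] ℝ) (h : 1 + D (0, 1, 0) ≠ 0) :
    (perturbEquiv D h : (ℝ × ℝ × (Fin k → ℝ)) →L[ℝ] (ℝ × ℝ × (Fin k → ℝ))) = Fwd k D := by
  ext v <;> rfl

lemma perturbEquiv_symm_coe (D : (ℝ × ℝ × (Fin k → ℝ)) →L[ℝ] ℝ) (h : 1 + D (0, 1, 0) ≠ 0) :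
    ((perturbEquiv D h).symm : (ℝ × ℝ × (Fin k → ℝ)) →L[ℝ] (ℝ × ℝ × (Fin k → ℝ)))
      = Inv k D := by
  rw [perturbEquiv, ContinuousLinearEquiv.symm_equivOfInverse]
  ext v <;> rfl

end PerturbAux

open PerturbAux Topology Filter


/-- The domain `(0, τ₀] × ℝ × ℝᵏ` for the perturbed defining function. -/
def cuspDom3 (τ₀ : ℝ) (k : ℕ) : Set (ℝ × ℝ × (Fin k → ℝ)) :=
  Set.Ioc 0 τ₀ ×ˢ (Set.univ : Set (ℝ × (Fin k → ℝ)))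

/-- The domain `(0, τ₁] × ℝᵏ` for the graph function. -/
def cuspDom2 (τ₁ : ℝ) (k : ℕ) : Set (ℝ × (Fin k → ℝ)) :=
  Set.Ioc 0 τ₁ ×ˢ (Set.univ : Set (Fin k → ℝ))

/-- Graph structure of a perturbed zero set with cusp-conormal bounds
(local-coordinate version): if `p = x⁰ + p̃` with `p̃` continuously
differentiable on `(0,τ₀] × ℝ × ℝᵏ` and `p̃`, `∂_{x⁰}p̃`, `∂_{x'}p̃`, `τ²∂_τ p̃`
all bounded by `C·τ^α`, then near `τ = 0` the zero set of `p` is the graph of a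
continuously differentiable function `f` with `|f| ≤ C·τ^α`,
`‖∂_{x'}f‖ ≤ 2C·τ^α`, and `|τ²∂_τ f| ≤ 2C·τ^α`. -/
theorem perturbed_zero_set_graph
    (α τ₀ C : ℝ) (hα : 0 < α) (hτ₀ : 0 < τ₀) (hC : 0 ≤ C) (k : ℕ)
    (P Pt : ℝ × ℝ × (Fin k → ℝ) → ℝ)
    (hP : ∀ z, P z = z.2.1 + Pt z)
    (DPt : ℝ × ℝ × (Fin k → ℝ) → (ℝ × ℝ × (Fin k → ℝ)) →L[ℝ] ℝ)
    (hdiff : ∀ z ∈ cuspDom3 τ₀ k, HasFDerivWithinAt Pt (DPt z) (cuspDom3 τ₀ k) z)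
    (hdcont : ContinuousOn DPt (cuspDom3 τ₀ k))
    (hbdd : ∀ z ∈ cuspDom3 τ₀ k, |Pt z| ≤ C * z.1 ^ α)
    (hdx0 : ∀ z ∈ cuspDom3 τ₀ k, |DPt z (0, 1, 0)| ≤ C * z.1 ^ α)
    (hdx' : ∀ z ∈ cuspDom3 τ₀ k, ∀ v : Fin k → ℝ, ‖v‖ ≤ 1 →
      |DPt z (0, 0, v)| ≤ C * z.1 ^ α)
    (hdτ : ∀ z ∈ cuspDom3 τ₀ k, |z.1 ^ 2 * DPt z (1, 0, 0)| ≤ C * z.1 ^ α) :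
    ∃ τ₁ : ℝ, τ₁ ∈ Set.Ioc (0 : ℝ) τ₀ ∧ C * τ₁ ^ α ≤ 1 / 2 ∧
      ∃ (f : ℝ × (Fin k → ℝ) → ℝ)
        (Df : ℝ × (Fin k → ℝ) → (ℝ × (Fin k → ℝ)) →L[ℝ] ℝ),
        (∀ w ∈ cuspDom2 τ₁ k, HasFDerivWithinAt f (Df w) (cuspDom2 τ₁ k) w) ∧
        ContinuousOn Df (cuspDom2 τ₁ k) ∧
        ∀ τ ∈ Set.Ioc (0 : ℝ) τ₁, ∀ x' : Fin k → ℝ,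
          (P (τ, f (τ, x'), x') = 0 ∧
            ∀ x0 : ℝ, P (τ, x0, x') = 0 → x0 = f (τ, x')) ∧
          |f (τ, x')| ≤ C * τ ^ α ∧
          (∀ v : Fin k → ℝ, ‖v‖ ≤ 1 → |Df (τ, x') (0, v)| ≤ 2 * C * τ ^ α) ∧
          |τ ^ 2 * Df (τ, x') (1, 0)| ≤ 2 * C * τ ^ α := by
  classical
  -- choice of τ₂ and τ₁
  have h2C : (0 : ℝ) < 2 * C + 1 := by linarith
  set b : ℝ := (2 * C + 1)⁻¹ ^ (α⁻¹) with hb_def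
  have hb0 : 0 < b := Real.rpow_pos_of_pos (inv_pos.mpr h2C) _
  set τ₂ : ℝ := min (τ₀ / 2) b with hτ₂_def
  have hτ₂0 : 0 < τ₂ := lt_min (by linarith) hb0
  have hτ₂τ₀ : τ₂ < τ₀ := lt_of_le_of_lt (min_le_left _ _) (by linarith)
  have hboundτ : ∀ τ : ℝ, 0 < τ → τ ≤ τ₂ → C * τ ^ α ≤ 1 / 2 := by
    intro τ h1 h2
    have hτb : τ ≤ b := le_trans h2 (min_le_right _ _)
    have h3 : τ ^ α ≤ b ^ α := Real.rpow_le_rpow h1.le hτb hα.le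
    have h4 : b ^ α = (2 * C + 1)⁻¹ :=
      Real.rpow_inv_rpow (by positivity) (ne_of_gt hα)
    have h5 : C * τ ^ α ≤ C * (2 * C + 1)⁻¹ := by
      rw [← h4]; exact mul_le_mul_of_nonneg_left h3 hC
    have h6 : (2 * C + 1) * (2 * C + 1)⁻¹ = 1 := mul_inv_cancel₀ (ne_of_gt h2C)
    have h7 : 0 ≤ (2 * C + 1)⁻¹ := inv_nonneg.mpr h2C.le
    nlinarith [h5, h6, h7]
  set τ₁ : ℝ := τ₂ / 2 with hτ₁_def
  have hτ₁0 : 0 < τ₁ := by positivity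
  have hτ₁τ₂ : τ₁ < τ₂ := by rw [hτ₁_def]; linarith
  -- membership and interior derivative helpers
  have hmem3 : ∀ z : ℝ × ℝ × (Fin k → ℝ), 0 < z.1 → z.1 ≤ τ₀ → z ∈ cuspDom3 τ₀ k :=
    fun z h1 h2 => ⟨⟨h1, h2⟩, trivial⟩
  have hUo : IsOpen ((Set.Ioo (0 : ℝ) τ₀) ×ˢ (Set.univ : Set (ℝ × (Fin k → ℝ)))) :=
    isOpen_Ioo.prod isOpen_univ
  have hnhds : ∀ z : ℝ × ℝ × (Fin k → ℝ), 0 < z.1 → z.1 < τ₀ → cuspDom3 τ₀ k ∈ 𝓝 z := by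
    intro z h1 h2
    refine Filter.mem_of_superset (hUo.mem_nhds ⟨⟨h1, h2⟩, trivial⟩) ?_
    exact Set.prod_mono Set.Ioo_subset_Ioc_self le_rfl
  have hfd : ∀ z : ℝ × ℝ × (Fin k → ℝ), 0 < z.1 → z.1 < τ₀ → HasFDerivAt Pt (DPt z) z :=
    fun z h1 h2 => (hdiff z (mem_of_mem_nhds (hnhds z h1 h2))).hasFDerivAt (hnhds z h1 h2)
  have hstrict : ∀ z : ℝ × ℝ × (Fin k → ℝ), 0 < z.1 → z.1 < τ₀ →
      HasStrictFDerivAt Pt (DPt z) z := by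
    intro z h1 h2
    refine hasStrictFDerivAt_of_hasFDerivAt_of_continuousAt ?_
      (hdcont.continuousAt (hnhds z h1 h2))
    filter_upwards [hUo.mem_nhds ⟨⟨h1, h2⟩, trivial⟩] with y hy
    exact hfd y hy.1.1 hy.1.2
  -- existence and uniqueness of the zero
  have hEU : ∀ w : ℝ × (Fin k → ℝ), 0 < w.1 → w.1 ≤ τ₂ →
      ∃! x0 : ℝ, P (w.1, x0, w.2) = 0 := by
    intro w h1 h2
    have hτlt : w.1 < τ₀ := lt_of_le_of_lt h2 hτ₂τ₀
    set g : ℝ → ℝ := fun t => t + Pt (w.1, t, w.2) with hg_def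
    have hg' : ∀ t : ℝ, HasDerivAt g (1 + DPt (w.1, t, w.2) (0, 1, 0)) t := by
      intro t
      have hl : HasDerivAt (fun t : ℝ => ((w.1, t, w.2) : ℝ × ℝ × (Fin k → ℝ)))
          ((0 : ℝ), (1 : ℝ), (0 : Fin k → ℝ)) t :=
        (hasDerivAt_const t w.1).prodMk ((hasDerivAt_id t).prodMk (hasDerivAt_const t w.2))
      have hc := (hfd _ h1 hτlt).comp_hasDerivAt t hl
      exact (hasDerivAt_id t).add hc
    have hpos : ∀ t : ℝ, 0 < 1 + DPt (w.1, t, w.2) (0, 1, 0) := by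
      intro t
      have hmle : |DPt (w.1, t, w.2) (0, 1, 0)| ≤ 1 / 2 :=
        le_trans (hdx0 _ (hmem3 _ h1 hτlt.le)) (hboundτ w.1 h1 h2)
      have := (abs_le.mp hmle).1
      linarith
    have hmono : StrictMono g :=
      strictMono_of_deriv_pos fun t => by rw [(hg' t).deriv]; exact hpos t
    have hgc : Continuous g :=
      continuous_iff_continuousAt.mpr fun t => (hg' t).continuousAt
    have ha : 0 ≤ C * w.1 ^ α := by positivity
    have hPtb : ∀ t : ℝ, |Pt (w.1, t, w.2)| ≤ C * w.1 ^ α := fun t =>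
      hbdd _ (hmem3 _ h1 hτlt.le)
    have hlo : g (-(C * w.1 ^ α + 1)) ≤ -1 := by
      have := (abs_le.mp (hPtb (-(C * w.1 ^ α + 1)))).2
      simp only [hg_def]
      linarith
    have hhi : (1 : ℝ) ≤ g (C * w.1 ^ α + 1) := by
      have := (abs_le.mp (hPtb (C * w.1 ^ α + 1))).1
      simp only [hg_def]
      linarith
    have hsub : Set.Icc (g (-(C * w.1 ^ α + 1))) (g (C * w.1 ^ α + 1)) ⊆
        g '' Set.Icc (-(C * w.1 ^ α + 1)) (C * w.1 ^ α + 1) :=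
      intermediate_value_Icc (by linarith) hgc.continuousOn
    have h0mem : (0 : ℝ) ∈ Set.Icc (g (-(C * w.1 ^ α + 1))) (g (C * w.1 ^ α + 1)) :=
      ⟨by linarith, by linarith⟩
    obtain ⟨t, -, ht⟩ := hsub h0mem
    refine ⟨t, ?_, ?_⟩
    · show P (w.1, t, w.2) = 0
      rw [hP]; exact ht
    · intro y hy
      have hy' : P (w.1, y, w.2) = 0 := hy
      rw [hP] at hy'
      exact hmono.injective (show g y = g t from hy'.trans ht.symm)
  -- the graph function
  set f : ℝ × (Fin k → ℝ) → ℝ := fun w =>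
    if h : ∃! x0 : ℝ, P (w.1, x0, w.2) = 0 then h.exists.choose else 0 with hf_def
  have hfzero : ∀ w : ℝ × (Fin k → ℝ), 0 < w.1 → w.1 ≤ τ₂ → P (w.1, f w, w.2) = 0 := by
    intro w h1 h2
    have h := hEU w h1 h2
    simp only [hf_def, dif_pos h]
    exact h.exists.choose_spec
  have hfuniq : ∀ w : ℝ × (Fin k → ℝ), 0 < w.1 → w.1 ≤ τ₂ →
      ∀ x0 : ℝ, P (w.1, x0, w.2) = 0 → x0 = f w := fun w h1 h2 x0 hx0 =>
    (hEU w h1 h2).unique hx0 (hfzero w h1 h2)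
  -- the derivative
  set Df : ℝ × (Fin k → ℝ) → (ℝ × (Fin k → ℝ)) →L[ℝ] ℝ := fun w =>
    (-(1 + DPt (w.1, f w, w.2) (0, 1, 0))⁻¹) • ((DPt (w.1, f w, w.2)).comp (J k))
    with hDf_def
  -- the key differentiability statement
  have hkey : ∀ w : ℝ × (Fin k → ℝ), 0 < w.1 → w.1 < τ₂ → HasFDerivAt f (Df w) w := by
    intro w hw1 hw2
    have hz0τ₀ : w.1 < τ₀ := lt_trans hw2 hτ₂τ₀
    have hmle : |DPt (w.1, f w, w.2) (0, 1, 0)| ≤ 1 / 2 :=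
      le_trans (hdx0 _ (hmem3 _ hw1 hz0τ₀.le)) (hboundτ w.1 hw1 hw2.le)
    have hposm : 0 < 1 + DPt (w.1, f w, w.2) (0, 1, 0) := by
      have := (abs_le.mp hmle).1; linarith
    have hne : 1 + DPt (w.1, f w, w.2) (0, 1, 0) ≠ 0 := ne_of_gt hposm
    have hA : HasStrictFDerivAt (fun z : ℝ × ℝ × (Fin k → ℝ) => z.2.1) (px0 k)
        (w.1, f w, w.2) :=
      HasStrictFDerivAt.comp (g := @Prod.fst ℝ (Fin k → ℝ))
        (f := @Prod.snd ℝ (ℝ × (Fin k → ℝ))) (w.1, f w, w.2)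
        hasStrictFDerivAt_fst hasStrictFDerivAt_snd
    have hB : HasStrictFDerivAt (fun z : ℝ × ℝ × (Fin k → ℝ) => z.2.2) (px' k)
        (w.1, f w, w.2) :=
      HasStrictFDerivAt.comp (g := @Prod.snd ℝ (Fin k → ℝ))
        (f := @Prod.snd ℝ (ℝ × (Fin k → ℝ))) (w.1, f w, w.2)
        hasStrictFDerivAt_snd hasStrictFDerivAt_snd
    have hC1 : HasStrictFDerivAt (fun z : ℝ × ℝ × (Fin k → ℝ) => z.1) (pτ k)
        (w.1, f w, w.2) := hasStrictFDerivAt_fst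
    have hΦs : HasStrictFDerivAt (fun z : ℝ × ℝ × (Fin k → ℝ) => (z.1, z.2.1 + Pt z, z.2.2))
        (Fwd k (DPt (w.1, f w, w.2))) (w.1, f w, w.2) :=
      hC1.prodMk ((hA.add (hstrict _ hw1 hz0τ₀)).prodMk hB)
    have hΦs' : HasStrictFDerivAt (fun z : ℝ × ℝ × (Fin k → ℝ) => (z.1, z.2.1 + Pt z, z.2.2))
        ((perturbEquiv (DPt (w.1, f w, w.2)) hne :
          (ℝ × ℝ × (Fin k → ℝ)) ≃L[ℝ] (ℝ × ℝ × (Fin k → ℝ))) :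
          (ℝ × ℝ × (Fin k → ℝ)) →L[ℝ] (ℝ × ℝ × (Fin k → ℝ))) (w.1, f w, w.2) := by
      rw [perturbEquiv_coe]; exact hΦs
    have hgs := hΦs'.to_localInverse
    have hri := hΦs'.eventually_right_inverse
    set g := hΦs'.localInverse (fun z : ℝ × ℝ × (Fin k → ℝ) => (z.1, z.2.1 + Pt z, z.2.2))
      (perturbEquiv (DPt (w.1, f w, w.2)) hne) (w.1, f w, w.2) with hg_def
    have hΦz0 : ((w.1, f w, w.2).1, (w.1, f w, w.2).2.1 + Pt (w.1, f w, w.2),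
        (w.1, f w, w.2).2.2) = ((w.1, (0 : ℝ), w.2) : ℝ × ℝ × (Fin k → ℝ)) := by
      have h0 : P (w.1, f w, w.2) = 0 := hfzero w hw1 hw2.le
      rw [hP] at h0
      exact Prod.ext rfl (Prod.ext h0 rfl)
    rw [hΦz0] at hgs hri
    have htend : Filter.Tendsto (fun u : ℝ × (Fin k → ℝ) =>
        ((u.1, (0 : ℝ), u.2) : ℝ × ℝ × (Fin k → ℝ))) (𝓝 w) (𝓝 (w.1, (0 : ℝ), w.2)) :=
      (continuous_fst.prodMk (continuous_const.prodMk continuous_snd)).tendsto w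
    have hev1 : ∀ᶠ u : ℝ × (Fin k → ℝ) in 𝓝 w,
        (fun z : ℝ × ℝ × (Fin k → ℝ) => (z.1, z.2.1 + Pt z, z.2.2)) (g (u.1, 0, u.2))
          = ((u.1, (0 : ℝ), u.2) : ℝ × ℝ × (Fin k → ℝ)) := htend.eventually hri
    have hop : ∀ᶠ u : ℝ × (Fin k → ℝ) in 𝓝 w, u.1 ∈ Set.Ioo (0 : ℝ) τ₂ := by
      have hmem : w ∈ (fun u : ℝ × (Fin k → ℝ) => u.1) ⁻¹' Set.Ioo (0 : ℝ) τ₂ := ⟨hw1, hw2⟩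
      exact Filter.eventually_of_mem
        ((isOpen_Ioo.preimage continuous_fst).mem_nhds hmem) fun u hu => hu
    have hevEq : ∀ᶠ u : ℝ × (Fin k → ℝ) in 𝓝 w, f u = (g (u.1, 0, u.2)).2.1 := by
      filter_upwards [hev1, hop] with u h1 h2
      have h1' : ((g (u.1, 0, u.2)).1, (g (u.1, 0, u.2)).2.1 + Pt (g (u.1, 0, u.2)),
          (g (u.1, 0, u.2)).2.2) = ((u.1, (0 : ℝ), u.2) : ℝ × ℝ × (Fin k → ℝ)) := h1
      have e1 : (g (u.1, 0, u.2)).1 = u.1 := congrArg Prod.fst h1'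
      have e2 : (g (u.1, 0, u.2)).2.1 + Pt (g (u.1, 0, u.2)) = 0 :=
        congrArg (fun z : ℝ × ℝ × (Fin k → ℝ) => z.2.1) h1'
      have e3 : (g (u.1, 0, u.2)).2.2 = u.2 :=
        congrArg (fun z : ℝ × ℝ × (Fin k → ℝ) => z.2.2) h1'
      have htup : ((u.1, (g (u.1, 0, u.2)).2.1, u.2) : ℝ × ℝ × (Fin k → ℝ))
          = g (u.1, 0, u.2) :=
        Prod.ext e1.symm (Prod.ext rfl e3.symm)
      have hPz : P (u.1, (g (u.1, 0, u.2)).2.1, u.2) = 0 := by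
        rw [hP]
        show (g (u.1, 0, u.2)).2.1 + Pt (u.1, (g (u.1, 0, u.2)).2.1, u.2) = 0
        rw [htup]
        exact e2
      exact (hfuniq u h2.1 h2.2.le _ hPz).symm
    have hJs : HasStrictFDerivAt (fun u : ℝ × (Fin k → ℝ) =>
        ((u.1, (0 : ℝ), u.2) : ℝ × ℝ × (Fin k → ℝ))) (J k) w :=
      hasStrictFDerivAt_fst.prodMk ((hasStrictFDerivAt_const (0 : ℝ) w).prodMk hasStrictFDerivAt_snd)
    have hcomp1 := hgs.comp w hJs
    have hproj : HasStrictFDerivAt (fun v : ℝ × ℝ × (Fin k → ℝ) => v.2.1) (px0 k)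
        (g (w.1, 0, w.2)) := hasStrictFDerivAt_fst.comp _ hasStrictFDerivAt_snd
    have hRHS : HasStrictFDerivAt (fun u : ℝ × (Fin k → ℝ) => (g (u.1, 0, u.2)).2.1)
        ((px0 k).comp
          ((((perturbEquiv (DPt (w.1, f w, w.2)) hne).symm :
            (ℝ × ℝ × (Fin k → ℝ)) →L[ℝ] (ℝ × ℝ × (Fin k → ℝ)))).comp (J k))) w := by
      have h := hproj.comp w hcomp1
      simpa [Function.comp] using h
    have hDeq : (px0 k).comp
        ((((perturbEquiv (DPt (w.1, f w, w.2)) hne).symm :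
          (ℝ × ℝ × (Fin k → ℝ)) →L[ℝ] (ℝ × ℝ × (Fin k → ℝ)))).comp (J k)) = Df w := by
      rw [perturbEquiv_symm_coe]
      refine ContinuousLinearMap.ext fun v => ?_
      simp only [hDf_def, ContinuousLinearMap.comp_apply, ContinuousLinearMap.smul_apply,
        Inv_apply, J_apply, px0_apply, smul_eq_mul]
      ring
    exact (hDeq ▸ hRHS.hasFDerivAt).congr_of_eventuallyEq hevEq
  -- assemble
  refine ⟨τ₁, ⟨hτ₁0, le_of_lt (lt_trans hτ₁τ₂ hτ₂τ₀)⟩, hboundτ τ₁ hτ₁0 hτ₁τ₂.le,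
    f, Df, ?_, ?_, ?_⟩
  · intro w hw
    exact (hkey w hw.1.1 (lt_of_le_of_lt hw.1.2 hτ₁τ₂)).hasFDerivWithinAt
  · -- continuity of Df
    have hfc : ContinuousOn f (cuspDom2 τ₁ k) := fun w hw =>
      ((hkey w hw.1.1 (lt_of_le_of_lt hw.1.2 hτ₁τ₂)).continuousAt).continuousWithinAt
    have hzfc : ContinuousOn (fun w : ℝ × (Fin k → ℝ) =>
        ((w.1, f w, w.2) : ℝ × ℝ × (Fin k → ℝ))) (cuspDom2 τ₁ k) :=
      (continuous_fst.continuousOn).prodMk (hfc.prodMk continuous_snd.continuousOn)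
    have hmaps : ∀ w ∈ cuspDom2 τ₁ k,
        ((w.1, f w, w.2) : ℝ × ℝ × (Fin k → ℝ)) ∈ cuspDom3 τ₀ k := fun w hw =>
      hmem3 _ hw.1.1 (le_trans hw.1.2 (le_of_lt (lt_trans hτ₁τ₂ hτ₂τ₀)))
    have hDc : ContinuousOn (fun w : ℝ × (Fin k → ℝ) => DPt (w.1, f w, w.2))
        (cuspDom2 τ₁ k) := hdcont.comp hzfc hmaps
    have hmc : ContinuousOn (fun w : ℝ × (Fin k → ℝ) => DPt (w.1, f w, w.2) (0, 1, 0))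
        (cuspDom2 τ₁ k) := hDc.clm_apply continuousOn_const
    have hnz : ∀ w ∈ cuspDom2 τ₁ k, 1 + DPt (w.1, f w, w.2) (0, 1, 0) ≠ 0 := by
      intro w hw
      have hmle : |DPt (w.1, f w, w.2) (0, 1, 0)| ≤ 1 / 2 :=
        le_trans (hdx0 _ (hmaps w hw)) (hboundτ w.1 hw.1.1 (le_trans hw.1.2 hτ₁τ₂.le))
      have := (abs_le.mp hmle).1
      exact ne_of_gt (by linarith)
    rw [hDf_def]
    exact (((continuousOn_const.add hmc).inv₀ hnz).neg).smul (hDc.clm_comp continuousOn_const)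
  · -- pointwise statements
    intro τ hτ x'
    have h1 : 0 < τ := hτ.1
    have h2 : τ ≤ τ₂ := le_trans hτ.2 hτ₁τ₂.le
    have hzmem : ((τ, f (τ, x'), x') : ℝ × ℝ × (Fin k → ℝ)) ∈ cuspDom3 τ₀ k :=
      hmem3 _ h1 (le_trans h2 hτ₂τ₀.le)
    have hCb : C * τ ^ α ≤ 1 / 2 := hboundτ τ h1 h2
    have hmle : |DPt (τ, f (τ, x'), x') (0, 1, 0)| ≤ C * τ ^ α := hdx0 _ hzmem
    have hposm : 0 < 1 + DPt (τ, f (τ, x'), x') (0, 1, 0) := by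
      have := (abs_le.mp (le_trans hmle hCb)).1; linarith
    have hr2 : (1 + DPt (τ, f (τ, x'), x') (0, 1, 0))⁻¹ ≤ 2 := by
      have h12 : (1 : ℝ) / 2 ≤ 1 + DPt (τ, f (τ, x'), x') (0, 1, 0) := by
        have := (abs_le.mp (le_trans hmle hCb)).1; linarith
      calc (1 + DPt (τ, f (τ, x'), x') (0, 1, 0))⁻¹ ≤ ((1 : ℝ) / 2)⁻¹ := by
            exact inv_anti₀ (by norm_num) h12
        _ = 2 := by norm_num
    have hrpos : 0 < (1 + DPt (τ, f (τ, x'), x') (0, 1, 0))⁻¹ := inv_pos.mpr hposm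
    refine ⟨⟨hfzero (τ, x') h1 h2, fun x0 h => hfuniq (τ, x') h1 h2 x0 h⟩, ?_, ?_, ?_⟩
    · -- |f| ≤ C τ^α
      have h0 : P (τ, f (τ, x'), x') = 0 := hfzero (τ, x') h1 h2
      rw [hP] at h0
      have hb := hbdd _ hzmem
      have : f (τ, x') = -Pt (τ, f (τ, x'), x') := by
        have : (τ, f (τ, x'), x').2.1 = f (τ, x') := rfl
        linarith [h0]
      rw [this, abs_neg]
      exact hb
    · -- x' derivative bound
      intro v hv
      have hd := hdx' _ hzmem v hv
      have happ : Df (τ, x') (0, v)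
          = -(1 + DPt (τ, f (τ, x'), x') (0, 1, 0))⁻¹ * DPt (τ, f (τ, x'), x') (0, 0, v) := by
        simp only [hDf_def, ContinuousLinearMap.smul_apply, ContinuousLinearMap.comp_apply,
          J_apply, smul_eq_mul]
      rw [happ, abs_mul, abs_neg, abs_of_pos hrpos]
      calc (1 + DPt (τ, f (τ, x'), x') (0, 1, 0))⁻¹ * |DPt (τ, f (τ, x'), x') (0, 0, v)|
          ≤ 2 * (C * τ ^ α) := by
            apply mul_le_mul hr2 hd (abs_nonneg _) (by norm_num)
        _ = 2 * C * τ ^ α := by ring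
    · -- τ derivative bound
      have hd := hdτ _ hzmem
      have happ : Df (τ, x') (1, 0)
          = -(1 + DPt (τ, f (τ, x'), x') (0, 1, 0))⁻¹ * DPt (τ, f (τ, x'), x') (1, 0, 0) := by
        simp only [hDf_def, ContinuousLinearMap.smul_apply, ContinuousLinearMap.comp_apply,
          J_apply, smul_eq_mul]
      rw [happ]
      have hre : τ ^ 2 * (-(1 + DPt (τ, f (τ, x'), x') (0, 1, 0))⁻¹
          * DPt (τ, f (τ, x'), x') (1, 0, 0))
          = -((1 + DPt (τ, f (τ, x'), x') (0, 1, 0))⁻¹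
            * (τ ^ 2 * DPt (τ, f (τ, x'), x') (1, 0, 0))) := by ring
      rw [hre, abs_neg, abs_mul, abs_of_pos hrpos]
      calc (1 + DPt (τ, f (τ, x'), x') (0, 1, 0))⁻¹
            * |τ ^ 2 * DPt (τ, f (τ, x'), x') (1, 0, 0)|
          ≤ 2 * (C * τ ^ α) := mul_le_mul hr2 hd (abs_nonneg _) (by norm_num)
        _ = 2 * C * τ ^ α := by ring
end
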